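/- arXiv:math/0511397 — 7 statements merged into one kernel-verified Lean document; each statement's English description precedes it below -/
import Mathlib

section
/- W_N is a path-connected subset of ℝ^{N−1}. -/
open Polynomial

/-- The complex coefficient vector associated to `a ∈ ℝ^{N-1}` (paper index `k ∈ {1,…,N-1}`):
`c_k = (a_k + i a_{N-k})/√2` for `k < N/2`, `c_{N/2} = a_{N/2}` (for `N` even), and
`c_k = (a_{N-k} - i a_k)/√2` for `k > N/2`, so that `c_{N-k} = conj (c_k)`. -/
noncomputable def crCoeff (N : ℕ) (a : EuclideanSpace ℝ (Fin (N - 1))) (k : ℕ) : ℂ :=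
  if h : 1 ≤ k ∧ k ≤ N - 1 then
    if 2 * k < N then
      ((a ⟨k - 1, by omega⟩ : ℝ) + Complex.I * (a ⟨N - k - 1, by omega⟩ : ℝ)) / (Real.sqrt 2 : ℝ)
    else if 2 * k = N then ((a ⟨k - 1, by omega⟩ : ℝ) : ℂ)
    else ((a ⟨N - k - 1, by omega⟩ : ℝ) - Complex.I * (a ⟨k - 1, by omega⟩ : ℝ)) / (Real.sqrt 2 : ℝ)
  else 0

/-- The conjugate reciprocal polynomial associated to `a ∈ ℝ^{N-1}`:
`a(x) = (x^N + 1) + ∑_{k=1}^{N-1} c_k x^{N-k}`. -/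
noncomputable def crPoly (N : ℕ) (a : EuclideanSpace ℝ (Fin (N - 1))) : Polynomial ℂ :=
  X ^ N + 1 + ∑ k ∈ Finset.Icc 1 (N - 1), C (crCoeff N a k) * X ^ (N - k)

/-- `W_N`: the set of `a ∈ ℝ^{N-1}` whose associated CR polynomial has all roots on the
unit circle. -/
noncomputable def WSet (N : ℕ) : Set (EuclideanSpace ℝ (Fin (N - 1))) :=
  {a | ∀ z ∈ (crPoly N a).roots, ‖z‖ = 1}

noncomputable def rootF (M : ℕ) (t : Fin M → ℝ) : Fin (M + 1) → ℂ :=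
  Fin.snoc (fun j => Complex.exp (Complex.I * (t j : ℂ)))
    ((-1) ^ (M + 1) * Complex.exp (-(Complex.I * ∑ j, (t j : ℂ))))

noncomputable def FP (M : ℕ) (t : Fin M → ℝ) : Polynomial ℂ :=
  ∏ i, (X - C (rootF M t i))

lemma abs_rootF (M : ℕ) (t : Fin M → ℝ) (i : Fin (M + 1)) : ‖rootF M t i‖ = 1 := by
  induction i using Fin.lastCases with
  | last =>
    simp only [rootF, Fin.snoc_last]
    rw [norm_mul, norm_pow, norm_neg, norm_one, one_pow, one_mul, Complex.norm_exp]
    have : (∑ j, (t j : ℂ)) = ((∑ j, t j : ℝ) : ℂ) := by push_cast; ring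
    rw [this]
    simp [Complex.exp_eq_one_iff]
  | cast j =>
    simp only [rootF, Fin.snoc_castSucc]
    rw [Complex.norm_exp]
    simp

lemma prod_rootF (M : ℕ) (t : Fin M → ℝ) : ∏ i, rootF M t i = (-1) ^ (M + 1) := by
  rw [Fin.prod_univ_castSucc]
  simp only [rootF, Fin.snoc_castSucc, Fin.snoc_last]
  rw [← Complex.exp_sum]
  rw [show (∑ j : Fin M, Complex.I * (t j : ℂ)) = Complex.I * ∑ j, (t j : ℂ) by
    rw [Finset.mul_sum]]
  rw [mul_comm ((-1 : ℂ) ^ (M + 1)), ← mul_assoc, ← Complex.exp_add]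
  simp

lemma FP_monic (M : ℕ) (t : Fin M → ℝ) : (FP M t).Monic :=
  monic_prod_of_monic _ _ fun i _ => monic_X_sub_C _

lemma FP_natDegree (M : ℕ) (t : Fin M → ℝ) : (FP M t).natDegree = M + 1 := by
  rw [FP, natDegree_prod _ _ fun i _ => X_sub_C_ne_zero _]
  simp

lemma FP_coeff_zero (M : ℕ) (t : Fin M → ℝ) : (FP M t).coeff 0 = 1 := by
  rw [coeff_zero_eq_eval_zero, FP, eval_prod]
  simp only [eval_sub, eval_X, eval_C, zero_sub]
  simp_rw [show ∀ x, -rootF M t x = (-1) * rootF M t x from fun x => by ring,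
    Finset.prod_mul_distrib, Finset.prod_const, Finset.card_univ, Fintype.card_fin, prod_rootF]
  rw [← mul_pow]
  simp

lemma reverse_X_sub_C' (w : ℂ) : (X - C w).reverse = 1 - C w * X := by
  have h : (X - C w).natDegree = 1 := natDegree_X_sub_C w
  unfold Polynomial.reverse
  rw [h, show (X : ℂ[X]) - C w = C 1 * X ^ 1 - C w * X ^ 0 by simp]
  rw [reflect_sub, reflect_C_mul_X_pow, reflect_C_mul_X_pow]
  simp [revAt_le]

lemma reverse_prod' {ι : Type*} (s : Finset ι) (f : ι → ℂ[X]) :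
    (∏ i ∈ s, f i).reverse = ∏ i ∈ s, (f i).reverse := by
  classical
  induction s using Finset.cons_induction with
  | empty => simp [Polynomial.reverse]
  | cons a s ha ih => rw [Finset.prod_cons, Finset.prod_cons, reverse_mul_of_domain, ih]

lemma FP_selfinv (M : ℕ) (t : Fin M → ℝ) {d : ℕ} (hd : d ≤ M + 1) :
    (FP M t).coeff d = (starRingEnd ℂ) ((FP M t).coeff (M + 1 - d)) := by
  have key : ((FP M t).map (starRingEnd ℂ)).reverse = FP M t := by
    rw [FP, Polynomial.map_prod, reverse_prod']
    have h1 : ∀ i, (Polynomial.map (starRingEnd ℂ) (X - C (rootF M t i))).reverse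
        = (- C ((starRingEnd ℂ) (rootF M t i))) * (X - C (rootF M t i)) := by
      intro i
      rw [Polynomial.map_sub, map_X, map_C, reverse_X_sub_C']
      have hz : ‖rootF M t i‖ = 1 := abs_rootF M t i
      have : (starRingEnd ℂ) (rootF M t i) * rootF M t i = 1 := by
        rw [mul_comm, Complex.mul_conj]
        norm_cast
        rw [← Complex.sq_norm, hz]; norm_num
      rw [mul_sub, neg_mul, neg_mul, ← C_mul, this, C_1]
      ring
    simp_rw [h1]
    rw [Finset.prod_mul_distrib]
    have : ∏ i, -C ((starRingEnd ℂ) (rootF M t i)) = C ((-1)^(M+1) * (starRingEnd ℂ) (∏ i, rootF M t i)) := by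
      have e1 : ∀ i : Fin (M+1), -C ((starRingEnd ℂ) (rootF M t i))
          = C ((-1) * (starRingEnd ℂ) (rootF M t i)) := fun i => by
        rw [C_mul]; simp
      simp_rw [e1]
      rw [← map_prod (Polynomial.C : ℂ →+* ℂ[X]) _ Finset.univ, Finset.prod_mul_distrib, Finset.prod_const,
        Finset.card_univ, Fintype.card_fin, ← map_prod (starRingEnd ℂ)]
    rw [this, prod_rootF]
    have : ((-1:ℂ))^(M+1) * (starRingEnd ℂ) ((-1)^(M+1)) = 1 := by
      rw [map_pow, map_neg, map_one, ← mul_pow]; norm_num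
    rw [this, map_one, one_mul]
  conv_lhs => rw [← key]
  rw [coeff_reverse]
  have hdeg : ((FP M t).map (starRingEnd ℂ)).natDegree = M + 1 := by
    rw [natDegree_map, FP_natDegree]
  rw [hdeg, revAt_le hd, coeff_map]

section crP
variable (N : ℕ) (a : EuclideanSpace ℝ (Fin (N - 1)))

lemma crPoly_coeff_sum (d : ℕ) :
    (∑ k ∈ Finset.Icc 1 (N - 1), C (crCoeff N a k) * X ^ (N - k)).coeff d
    = if 1 ≤ d ∧ d ≤ N - 1 then crCoeff N a (N - d) else 0 := by
  rw [finset_sum_coeff]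
  simp_rw [coeff_C_mul, coeff_X_pow, mul_ite, mul_one, mul_zero]
  by_cases hd : 1 ≤ d ∧ d ≤ N - 1
  · rw [if_pos hd]
    rw [Finset.sum_eq_single (N - d)]
    · rw [if_pos (by omega)]
    · intro k hk hne
      rw [Finset.mem_Icc] at hk
      rw [if_neg (by omega)]
    · intro h
      exact absurd (Finset.mem_Icc.2 (by omega)) h
  · rw [if_neg hd]
    apply Finset.sum_eq_zero
    intro k hk
    rw [Finset.mem_Icc] at hk
    rw [if_neg (by omega)]

lemma crPoly_coeff_top (hN : 1 ≤ N) : (crPoly N a).coeff N = 1 := by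
  rw [crPoly, coeff_add, coeff_add, coeff_X_pow, crPoly_coeff_sum, coeff_one]
  split_ifs <;> first | omega | ring

lemma crPoly_coeff_zero (hN : 1 ≤ N) : (crPoly N a).coeff 0 = 1 := by
  rw [crPoly, coeff_add, coeff_add, coeff_X_pow, crPoly_coeff_sum, coeff_one]
  split_ifs <;> first | omega | ring

lemma crPoly_coeff_mid {d : ℕ} (h1 : 1 ≤ d) (h2 : d ≤ N - 1) :
    (crPoly N a).coeff d = crCoeff N a (N - d) := by
  rw [crPoly, coeff_add, coeff_add, coeff_X_pow, crPoly_coeff_sum, coeff_one]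
  split_ifs <;> first | omega | ring

lemma crPoly_coeff_gt {d : ℕ} (hd : N < d) : (crPoly N a).coeff d = 0 := by
  rw [crPoly, coeff_add, coeff_add, coeff_X_pow, crPoly_coeff_sum, coeff_one]
  split_ifs <;> first | omega | ring

lemma crPoly_natDegree (hN : 1 ≤ N) : (crPoly N a).natDegree = N := by
  refine le_antisymm (natDegree_le_iff_coeff_eq_zero.2 fun d hd => crPoly_coeff_gt N a hd) ?_
  apply le_natDegree_of_ne_zero
  rw [crPoly_coeff_top N a hN]
  exact one_ne_zero

lemma crPoly_monic (hN : 1 ≤ N) : (crPoly N a).Monic := by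
  unfold Polynomial.Monic Polynomial.leadingCoeff
  rw [crPoly_natDegree N a hN, crPoly_coeff_top N a hN]

end crP

noncomputable def GMap (M : ℕ) (t : Fin M → ℝ) : EuclideanSpace ℝ (Fin M) := WithLp.toLp 2 fun j =>
  if 2 * ((j : ℕ) + 1) < M + 1 then Real.sqrt 2 * ((FP M t).coeff (M - (j : ℕ))).re
  else if 2 * ((j : ℕ) + 1) = M + 1 then ((FP M t).coeff ((j : ℕ) + 1)).re
  else Real.sqrt 2 * ((FP M t).coeff ((j : ℕ) + 1)).im

lemma sqrtC_ne : ((Real.sqrt 2 : ℝ) : ℂ) ≠ 0 := by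
  exact_mod_cast (Real.sqrt_pos.mpr two_pos).ne'

lemma crCoeff_GMap (M : ℕ) (t : Fin M → ℝ) {k : ℕ} (hk1 : 1 ≤ k) (hk2 : k ≤ M) :
    crCoeff (M + 1) (GMap M t) k = (FP M t).coeff (M + 1 - k) := by
  rw [crCoeff, dif_pos (by omega : 1 ≤ k ∧ k ≤ M + 1 - 1)]
  have e1 : ∀ pf : k - 1 < M + 1 - 1, GMap M t ⟨k - 1, pf⟩ =
      if 2 * ((k - 1) + 1) < M + 1 then Real.sqrt 2 * ((FP M t).coeff (M - (k - 1))).re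
      else if 2 * ((k - 1) + 1) = M + 1 then ((FP M t).coeff ((k - 1) + 1)).re
      else Real.sqrt 2 * ((FP M t).coeff ((k - 1) + 1)).im := fun _ => rfl
  have e2 : ∀ pf : M + 1 - k - 1 < M + 1 - 1, GMap M t ⟨M + 1 - k - 1, pf⟩ =
      if 2 * ((M + 1 - k - 1) + 1) < M + 1 then
        Real.sqrt 2 * ((FP M t).coeff (M - (M + 1 - k - 1))).re
      else if 2 * ((M + 1 - k - 1) + 1) = M + 1 then ((FP M t).coeff ((M + 1 - k - 1) + 1)).re
      else Real.sqrt 2 * ((FP M t).coeff ((M + 1 - k - 1) + 1)).im := fun _ => rfl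
  by_cases h1 : 2 * k < M + 1
  · rw [if_pos h1, e1, e2, if_pos (by omega), if_neg (by omega), if_neg (by omega),
      show M - (k - 1) = M + 1 - k by omega, show M + 1 - k - 1 + 1 = M + 1 - k by omega]
    set z := (FP M t).coeff (M + 1 - k)
    rw [div_eq_iff sqrtC_ne]
    conv_rhs => rw [← Complex.re_add_im z]
    push_cast
    ring
  · by_cases h2 : 2 * k = M + 1
    · rw [if_neg h1, if_pos h2, e1, if_neg (by omega), if_pos (by omega),
        show k - 1 + 1 = k by omega, show M + 1 - k = k by omega]
      have hself := FP_selfinv M t (d := k) (by omega)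
      rw [show M + 1 - k = k by omega] at hself
      set z := (FP M t).coeff k
      have : (z.re : ℂ) = z := by
        rw [← Complex.conj_eq_iff_re]
        exact hself.symm
      rw [this]
    · rw [if_neg h1, if_neg h2, e1, e2, if_pos (by omega), if_neg (by omega), if_neg (by omega),
        show k - 1 + 1 = k by omega, show M - (M + 1 - k - 1) = k by omega]
      rw [FP_selfinv M t (d := M + 1 - k) (by omega), show M + 1 - (M + 1 - k) = k by omega]
      set z := (FP M t).coeff k
      rw [div_eq_iff sqrtC_ne]
      rw [show (starRingEnd ℂ) z = (z.re : ℂ) - (z.im : ℂ) * Complex.I from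
        Complex.ext (by simp) (by simp)]
      push_cast
      ring

lemma crPoly_GMap (M : ℕ) (t : Fin M → ℝ) : crPoly (M + 1) (GMap M t) = FP M t := by
  ext d
  rcases Nat.lt_or_ge (M + 1) d with hd | hd
  · rw [crPoly_coeff_gt _ _ hd, coeff_eq_zero_of_natDegree_lt (by rw [FP_natDegree]; omega)]
  rcases Nat.eq_zero_or_pos d with rfl | hd0
  · rw [crPoly_coeff_zero _ _ (by omega), FP_coeff_zero]
  rcases eq_or_lt_of_le hd with rfl | hdlt
  · rw [crPoly_coeff_top _ _ (by omega)]
    have := (FP_monic M t).coeff_natDegree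
    rw [FP_natDegree] at this
    rw [this]
  · have h2 : d ≤ M + 1 - 1 := by omega
    rw [crPoly_coeff_mid _ _ hd0 h2, crCoeff_GMap M t (by omega) (by omega),
      show M + 1 - (M + 1 - d) = d by omega]

lemma GMap_mem_WSet (M : ℕ) (t : Fin M → ℝ) : GMap M t ∈ WSet (M + 1) := by
  intro z hz
  rw [crPoly_GMap] at hz
  have hroot : (FP M t).eval z = 0 := (isRoot_of_mem_roots hz).eq_zero
  rw [FP, eval_prod] at hroot
  obtain ⟨i, -, hi⟩ := Finset.prod_eq_zero_iff.mp hroot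
  simp only [eval_sub, eval_X, eval_C, sub_eq_zero] at hi
  rw [hi]
  exact abs_rootF M t i

lemma continuous_rootF (M : ℕ) (i : Fin (M + 1)) : Continuous fun t : Fin M → ℝ => rootF M t i := by
  induction i using Fin.lastCases with
  | last =>
    simp only [rootF, Fin.snoc_last]
    fun_prop
  | cast j =>
    simp only [rootF, Fin.snoc_castSucc]
    fun_prop

lemma FP_coeff_eq (M : ℕ) (t : Fin M → ℝ) {d : ℕ} (hd : d ≤ M + 1) :
    (FP M t).coeff d = (-1) ^ (M + 1 - d) *
      ∑ A ∈ Finset.powersetCard (M + 1 - d) Finset.univ, ∏ i ∈ A, rootF M t i := by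
  have h1 : FP M t = ((Finset.univ.val.map (rootF M t)).map fun r => X - C r).prod := by
    rw [FP, Multiset.map_map, Finset.prod]
    rfl
  have hcard : Multiset.card (Finset.univ.val.map (rootF M t)) = M + 1 := by simp
  rw [h1, Multiset.prod_X_sub_C_coeff _ (by rw [hcard]; exact hd), hcard,
    Finset.esymm_map_val]

lemma continuous_GMap (M : ℕ) : Continuous (GMap M) := by
  refine (PiLp.continuous_toLp 2 _).comp ?_
  apply continuous_pi
  intro j
  have hcoeff : ∀ d : ℕ, d ≤ M + 1 → Continuous fun t : Fin M → ℝ => (FP M t).coeff d := by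
    intro d hd
    simp_rw [fun t => FP_coeff_eq M t hd]
    exact continuous_const.mul (continuous_finset_sum _ fun A _ =>
      continuous_finset_prod _ fun i _ => continuous_rootF M i)
  split_ifs with h1 h2
  · exact continuous_const.mul (Complex.continuous_re.comp (hcoeff _ (by omega)))
  · exact Complex.continuous_re.comp (hcoeff _ (by omega))
  · exact continuous_const.mul (Complex.continuous_im.comp (hcoeff _ (by omega)))

lemma sqrtR_ne : (Real.sqrt 2 : ℝ) ≠ 0 := (Real.sqrt_pos.mpr two_pos).ne'

lemma GMap_eq_of_FP (M : ℕ) (hM : 1 ≤ M) (a : EuclideanSpace ℝ (Fin (M + 1 - 1)))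
    (t : Fin M → ℝ) (hFP : FP M t = crPoly (M + 1) a) : GMap M t = a := by
  ext j
  have hj : (j : ℕ) < M := j.isLt
  have haux : ∀ (m : ℕ) (pf : m < M + 1 - 1), m = (j : ℕ) → a ⟨m, pf⟩ = a j := by
    rintro m pf rfl
    rfl
  show (if 2 * ((j : ℕ) + 1) < M + 1 then Real.sqrt 2 * ((FP M t).coeff (M - (j : ℕ))).re
    else if 2 * ((j : ℕ) + 1) = M + 1 then ((FP M t).coeff ((j : ℕ) + 1)).re
    else Real.sqrt 2 * ((FP M t).coeff ((j : ℕ) + 1)).im) = a j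
  split_ifs with h1 h2
  · rw [hFP, crPoly_coeff_mid _ _ (by omega) (by omega),
      show M + 1 - (M - (j : ℕ)) = (j : ℕ) + 1 by omega,
      crCoeff, dif_pos (by omega : 1 ≤ (j : ℕ) + 1 ∧ (j : ℕ) + 1 ≤ M + 1 - 1), if_pos h1]
    simp only [Complex.div_ofReal_re, Complex.add_re, Complex.ofReal_re, Complex.mul_re,
      Complex.I_re, Complex.ofReal_im, Complex.I_im, zero_mul, one_mul, mul_zero, sub_zero,
      add_zero, zero_sub, neg_zero]
    rw [haux _ _ (by omega)]
    field_simp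
  · rw [hFP, crPoly_coeff_mid _ _ (by omega) (by omega),
      show M + 1 - ((j : ℕ) + 1) = (j : ℕ) + 1 by omega,
      crCoeff, dif_pos (by omega : 1 ≤ (j : ℕ) + 1 ∧ (j : ℕ) + 1 ≤ M + 1 - 1),
      if_neg (by omega), if_pos h2]
    rw [Complex.ofReal_re, haux _ _ (by omega)]
  · rw [hFP, crPoly_coeff_mid _ _ (by omega) (by omega),
      show M + 1 - ((j : ℕ) + 1) = M - (j : ℕ) by omega,
      crCoeff, dif_pos (by omega : 1 ≤ M - (j : ℕ) ∧ M - (j : ℕ) ≤ M + 1 - 1),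
      if_pos (by omega)]
    simp only [Complex.div_ofReal_im, Complex.add_im, Complex.ofReal_im, Complex.mul_im,
      Complex.I_re, Complex.ofReal_re, Complex.I_im, zero_mul, one_mul, mul_zero, zero_add,
      add_zero]
    rw [haux _ _ (by omega)]
    field_simp

lemma exists_t (M : ℕ) (hM : 1 ≤ M) (a : EuclideanSpace ℝ (Fin (M + 1 - 1)))
    (ha : a ∈ WSet (M + 1)) : ∃ t : Fin M → ℝ, GMap M t = a := by
  set p := crPoly (M + 1) a with hp
  have hmon : p.Monic := crPoly_monic _ _ (by omega)
  have hsplit : Splits p := IsAlgClosed.splits p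
  have hcard : Multiset.card p.roots = M + 1 := by
    rw [splits_iff_card_roots] at hsplit
    rw [hsplit, crPoly_natDegree _ _ (by omega)]
  set l := p.roots.toList with hl
  have hlen : l.length = M + 1 := by rw [hl, Multiset.length_toList, hcard]
  set z : Fin (M + 1) → ℂ := fun i => l.get (Fin.cast hlen.symm i) with hzdef
  have hzmem : ∀ i, z i ∈ p.roots := by
    intro i
    rw [← Multiset.mem_toList]
    exact List.get_mem _ _
  have habs : ∀ i, ‖z i‖ = 1 := fun i => ha _ (hzmem i)
  have hzne : ∀ i, z i ≠ 0 := by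
    intro i h
    have := habs i
    rw [h] at this
    simp at this
  have hps : p = ∏ i, (X - C (z i)) := by
    conv_lhs => rw [(IsAlgClosed.splits p).eq_prod_roots_of_monic hmon, ← Multiset.coe_toList p.roots, ← hl,
      Multiset.map_coe, Multiset.prod_coe]
    conv_lhs => rw [← List.ofFn_get l, List.map_ofFn, List.prod_ofFn]
    rw [← Fin.prod_congr' (fun i => X - C (z i)) hlen]
    rfl
  have hprodz : ∏ i, z i = (-1) ^ (M + 1) := by
    have h0 : p.eval 0 = 1 := by
      rw [← coeff_zero_eq_eval_zero, hp, crPoly_coeff_zero _ _ (by omega)]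
    rw [hps, eval_prod] at h0
    simp only [eval_sub, eval_X, eval_C, zero_sub] at h0
    rw [show (fun x : Fin (M+1) => -z x) = fun x => (-1) * z x from funext fun x => by ring] at h0
    rw [Finset.prod_mul_distrib, Finset.prod_const, Finset.card_univ, Fintype.card_fin] at h0
    have h0' : ((-1 : ℂ)) ^ (M + 1) * ∏ i, z i = 1 := h0
    have hinv : ((-1 : ℂ)) ^ (M + 1) * ((-1 : ℂ)) ^ (M + 1) = 1 := by
      rw [← mul_pow]; norm_num
    calc ∏ i, z i = ((-1 : ℂ)^(M+1) * (-1 : ℂ)^(M+1)) * ∏ i, z i := by rw [hinv, one_mul]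
    _ = (-1 : ℂ)^(M+1) * ((-1 : ℂ)^(M+1) * ∏ i, z i) := by ring
    _ = (-1 : ℂ)^(M+1) := by rw [h0', mul_one]
  have hzexp : ∀ j : Fin M, Complex.exp (Complex.I * ((z j.castSucc).arg : ℂ)) = z j.castSucc := by
    intro j
    have h := Complex.norm_mul_exp_arg_mul_I (z j.castSucc)
    rw [habs] at h
    conv_rhs => rw [← h]
    rw [Complex.ofReal_one, one_mul, mul_comm]
  refine ⟨fun j => (z j.castSucc).arg, ?_⟩
  have hroot : rootF M (fun j => (z j.castSucc).arg) = z := by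
    funext i
    induction i using Fin.lastCases with
    | cast j =>
      simp only [rootF, Fin.snoc_castSucc]
      exact hzexp j
    | last =>
      simp only [rootF, Fin.snoc_last]
      have hprodsplit : (∏ j : Fin M, z j.castSucc) * z (Fin.last M) = (-1) ^ (M + 1) := by
        rw [← Fin.prod_univ_castSucc]; exact hprodz
      have hexp : Complex.exp (Complex.I * ∑ j : Fin M, ((z j.castSucc).arg : ℂ))
          = ∏ j : Fin M, z j.castSucc := by
        rw [Finset.mul_sum, Complex.exp_sum]
        exact Finset.prod_congr rfl fun j _ => hzexp j
      rw [Complex.exp_neg, hexp]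
      have hne : (∏ j : Fin M, z j.castSucc) ≠ 0 := Finset.prod_ne_zero_iff.2 fun j _ => hzne _
      field_simp
      calc (-1 : ℂ) ^ (M + 1) = (∏ j : Fin M, z j.castSucc) * z (Fin.last M) := hprodsplit.symm
      _ = (∏ j : Fin M, z j.castSucc) * z (Fin.last M) := by ring
  apply GMap_eq_of_FP M hM a
  rw [FP, hroot, ← hps]


/-- `W_N` is a path-connected subset of `ℝ^{N-1}`. -/
theorem WSet_isPathConnected (N : ℕ) (hN : 2 ≤ N) : IsPathConnected (WSet N) := by
  obtain ⟨M, rfl⟩ : ∃ M, N = M + 1 := ⟨N - 1, by omega⟩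
  have hM : 1 ≤ M := by omega
  have hrange : WSet (M + 1) = Set.range (GMap M) := by
    ext a
    constructor
    · intro ha
      obtain ⟨t, ht⟩ := exists_t M hM a ha
      exact ⟨t, ht⟩
    · rintro ⟨t, rfl⟩
      exact GMap_mem_WSet M t
  rw [hrange]
  exact isPathConnected_range (continuous_GMap M)
end

section
/- W_N has positive (N−1)-dimensional Lebesgue measure. -/
open Polynomial

lemma coord_abs_le_norm {n : ℕ} (a : EuclideanSpace ℝ (Fin n)) (i : Fin n) :
    |a i| ≤ ‖a‖ := by
  rw [EuclideanSpace.norm_eq, ← Real.sqrt_sq_eq_abs]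
  apply Real.sqrt_le_sqrt
  calc (a i)^2 = ‖a i‖^2 := by rw [Real.norm_eq_abs, sq_abs]
  _ ≤ ∑ j, ‖a j‖^2 :=
    Finset.single_le_sum (f := fun j => ‖a j‖^2) (fun j _ => sq_nonneg _) (Finset.mem_univ i)

lemma sqrt_two_ge_one : (1:ℝ) ≤ Real.sqrt 2 := by
  rw [show (1:ℝ) = Real.sqrt 1 by simp]
  exact Real.sqrt_le_sqrt (by norm_num)

lemma aux_abs_le (x y : ℝ) :
    ‖(((x:ℝ):ℂ) + Complex.I * ((y:ℝ):ℂ))‖ / Real.sqrt 2 ≤ |x| + |y| := by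
  refine (div_le_self (norm_nonneg _) sqrt_two_ge_one).trans ?_
  refine (norm_add_le _ _).trans ?_
  simp

lemma aux_abs_le' (x y : ℝ) :
    ‖(((x:ℝ):ℂ) - Complex.I * ((y:ℝ):ℂ))‖ / Real.sqrt 2 ≤ |x| + |y| := by
  refine (div_le_self (norm_nonneg _) sqrt_two_ge_one).trans ?_
  refine (norm_sub_le _ _).trans ?_
  simp

lemma crCoeff_abs_le (N : ℕ) (a : EuclideanSpace ℝ (Fin (N-1))) (k : ℕ) :
    ‖crCoeff N a k‖ ≤ 2 * ‖a‖ := by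
  have hn : (0:ℝ) ≤ ‖a‖ := norm_nonneg a
  unfold crCoeff
  split_ifs with h h1 h2
  · rw [norm_div]
    simp only [Complex.norm_real, Real.norm_eq_abs, abs_of_nonneg (Real.sqrt_nonneg 2)]
    calc _ ≤ |a ⟨k-1, by omega⟩| + |a ⟨N-k-1, by omega⟩| := aux_abs_le _ _
    _ ≤ ‖a‖ + ‖a‖ := add_le_add (coord_abs_le_norm a _) (coord_abs_le_norm a _)
    _ = 2 * ‖a‖ := by ring
  · rw [Complex.norm_real, Real.norm_eq_abs]
    calc _ ≤ ‖a‖ := coord_abs_le_norm a _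
    _ ≤ 2 * ‖a‖ := by linarith
  · rw [norm_div]
    simp only [Complex.norm_real, Real.norm_eq_abs, abs_of_nonneg (Real.sqrt_nonneg 2)]
    calc _ ≤ |a ⟨N-k-1, by omega⟩| + |a ⟨k-1, by omega⟩| := aux_abs_le' _ _
    _ ≤ ‖a‖ + ‖a‖ := add_le_add (coord_abs_le_norm a _) (coord_abs_le_norm a _)
    _ = 2 * ‖a‖ := by ring
  · simpa using hn

lemma coord_congr {n : ℕ} (a : EuclideanSpace ℝ (Fin n)) {i j : ℕ} (h : i = j)
    (hi : i < n) : a ⟨i, hi⟩ = a ⟨j, h ▸ hi⟩ := by subst h; rfl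

lemma crCoeff_conj (N : ℕ) (a : EuclideanSpace ℝ (Fin (N-1))) {k : ℕ}
    (h1 : 1 ≤ k) (h2 : k ≤ N - 1) :
    (starRingEnd ℂ) (crCoeff N a k) = crCoeff N a (N - k) := by
  have hN : 2 ≤ N := by omega
  have hk' : 1 ≤ N - k ∧ N - k ≤ N - 1 := ⟨by omega, by omega⟩
  unfold crCoeff
  rcases lt_trichotomy (2*k) N with h | h | h
  · rw [dif_pos ⟨h1, h2⟩, if_pos h, dif_pos hk', if_neg (by omega), if_neg (by omega),
      coord_congr a (show N - (N - k) - 1 = k - 1 from by omega)]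
    first
      | (simp [map_div₀, Complex.conj_ofReal]; ring)
      | simp [map_div₀, Complex.conj_ofReal]
  · rw [dif_pos ⟨h1, h2⟩, if_neg (by omega), if_pos h, dif_pos hk', if_neg (by omega),
      if_pos (by omega), coord_congr a (show N - k - 1 = k - 1 from by omega)]
    simp [Complex.conj_ofReal]
  · rw [dif_pos ⟨h1, h2⟩, if_neg (by omega), if_neg (by omega), dif_pos hk',
      if_pos (by omega), coord_congr a (show N - k - 1 = N - k - 1 from rfl),
      coord_congr a (show N - (N - k) - 1 = k - 1 from by omega)]
    simp [map_div₀, Complex.conj_ofReal]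

noncomputable def crS (N : ℕ) (a : EuclideanSpace ℝ (Fin (N-1))) (θ : ℝ) : ℂ :=
  ∑ k ∈ Finset.Icc 1 (N-1), crCoeff N a k *
    Complex.exp (((((N:ℝ)/2 - k) * θ : ℝ) : ℂ) * Complex.I)

lemma crS_conj (N : ℕ) (a : EuclideanSpace ℝ (Fin (N-1))) (θ : ℝ) :
    (starRingEnd ℂ) (crS N a θ) = crS N a θ := by
  unfold crS
  rw [map_sum]
  refine Finset.sum_nbij' (i := fun k => N - k) (j := fun k => N - k) ?_ ?_ ?_ ?_ ?_
  · intro k hk; simp only [Finset.mem_Icc] at *; omega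
  · intro k hk; simp only [Finset.mem_Icc] at *; omega
  · intro k hk; simp only [Finset.mem_Icc] at *; omega
  · intro k hk; simp only [Finset.mem_Icc] at *; omega
  · intro k hk
    simp only [Finset.mem_Icc] at hk
    rw [map_mul, crCoeff_conj N a hk.1 hk.2, ← Complex.exp_conj]
    congr 2
    have : ((N - k : ℕ) : ℝ) = (N : ℝ) - k := by
      have : k ≤ N := by omega
      push_cast [this]; ring
    rw [map_mul, Complex.conj_ofReal, Complex.conj_I]
    simp only [this]
    push_cast
    ring

lemma crS_abs_le (N : ℕ) (a : EuclideanSpace ℝ (Fin (N-1))) (θ : ℝ) :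
    ‖crS N a θ‖ ≤ ((N:ℝ) - 1) * (2 * ‖a‖) := by
  unfold crS
  refine (norm_sum_le _ _).trans ?_
  have hb : ∀ k ∈ Finset.Icc 1 (N-1), ‖crCoeff N a k *
      Complex.exp (((((N:ℝ)/2 - k) * θ : ℝ) : ℂ) * Complex.I)‖ ≤ 2 * ‖a‖ := by
    intro k _
    rw [norm_mul, Complex.norm_exp_ofReal_mul_I, mul_one]
    exact crCoeff_abs_le N a k
  refine (Finset.sum_le_sum hb).trans ?_
  rw [Finset.sum_const, Nat.card_Icc]
  rcases Nat.lt_or_ge N 1 with h | h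
  · interval_cases N
    have : ‖a‖ = 0 := by
      simp [EuclideanSpace.norm_eq]
    simp [this]
  · have hcast : ((N - 1 + 1 - 1 : ℕ) : ℝ) ≤ (N:ℝ) - 1 := by
      have h2 : (1:ℝ) ≤ (N:ℝ) := by exact_mod_cast h
      rw [show N - 1 + 1 - 1 = N - 1 from by omega, Nat.cast_sub (by omega)]
      push_cast
      linarith
    rw [nsmul_eq_mul]
    have hpos : (0:ℝ) ≤ 2 * ‖a‖ := by positivity
    exact mul_le_mul_of_nonneg_right hcast hpos


lemma crPoly_eval (N : ℕ) (a : EuclideanSpace ℝ (Fin (N-1))) (θ : ℝ) :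
    eval (Complex.exp ((θ:ℂ) * Complex.I)) (crPoly N a)
      = Complex.exp ((((N:ℝ)/2 * θ : ℝ):ℂ) * Complex.I) *
        (2 * ((Real.cos ((N:ℝ)*θ/2)):ℂ) + crS N a θ) := by
  have hexp : ∀ x y : ℝ, Complex.exp (((x:ℝ):ℂ)*Complex.I) * Complex.exp (((y:ℝ):ℂ)*Complex.I)
      = Complex.exp (((x+y : ℝ):ℂ)*Complex.I) := by
    intro x y; rw [← Complex.exp_add, ← add_mul, ← Complex.ofReal_add]
  have hpow : ∀ m : ℕ, Complex.exp ((θ:ℂ)*Complex.I) ^ m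
      = Complex.exp ((((m:ℝ)*θ : ℝ):ℂ)*Complex.I) := by
    intro m
    rw [← Complex.exp_nat_mul]
    congr 1
    push_cast
    ring
  rw [crPoly]
  simp only [eval_add, eval_pow, eval_X, eval_one, eval_finset_sum, eval_mul, eval_C, hpow]
  rw [Complex.ofReal_cos, Complex.two_cos, mul_add, mul_add, ← Complex.ofReal_neg, hexp, hexp]
  rw [show (N:ℝ)/2*θ + (N:ℝ)*θ/2 = (N:ℝ)*θ from by ring,
      show (N:ℝ)/2*θ + -((N:ℝ)*θ/2) = 0 from by ring]
  simp only [Complex.ofReal_zero, zero_mul, Complex.exp_zero]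
  rw [crS, Finset.mul_sum]
  congr 1
  refine Finset.sum_congr rfl ?_
  intro k hk
  simp only [Finset.mem_Icc] at hk
  rw [mul_comm (Complex.exp _) (crCoeff N a k * _), mul_assoc, hexp]
  congr 3
  rw [Nat.cast_sub (by omega : k ≤ N)]
  ring


/-- `W_N` has positive (N-1)-dimensional Lebesgue measure. -/
theorem WSet_volume_pos (N : ℕ) (hN : 2 ≤ N) : 0 < MeasureTheory.volume (WSet N) := by
  have hNR : (0:ℝ) < N := by exact_mod_cast Nat.lt_of_lt_of_le (by norm_num) hN
  have hπ := Real.pi_pos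
  set δ : ℝ := 1 / (2 * N) with hδdef
  have hδpos : 0 < δ := by positivity
  suffices hsub : Metric.ball (0 : EuclideanSpace ℝ (Fin (N-1))) δ ⊆ WSet N by
    refine lt_of_lt_of_le ?_ (MeasureTheory.measure_mono hsub)
    exact Metric.measure_ball_pos _ _ hδpos
  intro a ha
  rw [Metric.mem_ball, dist_zero_right] at ha
  -- bound on S
  have hS1 : ∀ θ : ℝ, ‖crS N a θ‖ < 1 := by
    intro θ
    refine (crS_abs_le N a θ).trans_lt ?_
    have hN1 : (1:ℝ) ≤ (N:ℝ) - 1 := by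
      have : (2:ℝ) ≤ N := by exact_mod_cast hN
      linarith
    calc ((N:ℝ)-1)*(2*‖a‖) < ((N:ℝ)-1)*(2*δ) := by
          apply mul_lt_mul_of_pos_left _ (by linarith)
          linarith
    _ = ((N:ℝ)-1)/N := by rw [hδdef]; field_simp
    _ < 1 := by rw [div_lt_one hNR]; linarith
  -- real-valuedness of S
  have hSval : ∀ θ : ℝ, crS N a θ = ((crS N a θ).re : ℂ) := by
    intro θ
    have him : (crS N a θ).im = 0 := Complex.conj_eq_iff_im.mp (crS_conj N a θ)
    exact Complex.ext rfl (by simp [him])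
  set F : ℝ → ℝ := fun θ => 2 * Real.cos ((N:ℝ)*θ/2) + (crS N a θ).re with hFdef
  have heval : ∀ θ : ℝ, eval (Complex.exp ((θ:ℂ)*Complex.I)) (crPoly N a)
      = Complex.exp ((((N:ℝ)/2*θ : ℝ):ℂ)*Complex.I) * ((F θ : ℝ) : ℂ) := by
    intro θ
    rw [crPoly_eval N a θ, hFdef]
    congr 1
    rw [hSval θ]
    push_cast
    ring
  -- continuity
  have hScont : Continuous (fun θ => crS N a θ) := by
    unfold crS
    apply continuous_finset_sum
    intro k _
    apply Continuous.mul continuous_const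
    apply Complex.continuous_exp.comp
    apply Continuous.mul _ continuous_const
    exact Complex.continuous_ofReal.comp (continuous_const.mul continuous_id)
  have hFcont : Continuous F := by
    rw [hFdef]
    apply Continuous.add
    · apply Continuous.mul continuous_const
      apply Real.continuous_cos.comp
      fun_prop
    · exact Complex.continuous_re.comp hScont
  -- grid points
  set θg : ℕ → ℝ := fun j => 2*Real.pi*j/N with hθg
  have hθle : ∀ {i j : ℕ}, i ≤ j → θg i ≤ θg j := by
    intro i j hij
    have hij' : (i:ℝ) ≤ j := by exact_mod_cast hij
    rw [hθg, div_le_div_iff_of_pos_right hNR]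
    nlinarith
  have hθlt : ∀ j : ℕ, θg j < θg (j+1) := by
    intro j
    rw [hθg]
    have : (j:ℝ) < (j:ℝ) + 1 := by linarith
    push_cast
    gcongr
  have hθ0 : ∀ j : ℕ, 0 ≤ θg j := by
    intro j
    rw [hθg]
    positivity
  have hθtop : θg N = 2*Real.pi := by
    rw [hθg]
    field_simp
  have hcosg : ∀ j : ℕ, Real.cos ((N:ℝ)*(θg j)/2) = (-1)^j := by
    intro j
    rw [hθg, show (N:ℝ)*(2*Real.pi*j/N)/2 = (j:ℝ)*Real.pi from by field_simp]
    simpa using Real.cos_nat_mul_pi_sub 0 j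
  have hFj : ∀ j : ℕ, |F (θg j) - 2*(-1)^j| < 1 := by
    intro j
    rw [hFdef]
    simp only [hcosg j]
    rw [show 2*(-1:ℝ)^j + (crS N a (θg j)).re - 2*(-1)^j = (crS N a (θg j)).re from by ring]
    exact lt_of_le_of_lt (Complex.abs_re_le_norm _) (hS1 _)
  have hroot : ∀ j : ℕ, ∃ s ∈ Set.Ioo (θg j) (θg (j+1)), F s = 0 := by
    intro j
    rcases Nat.even_or_odd j with he | ho
    · have h1 : 0 < F (θg j) := by
        have := hFj j
        rw [he.neg_one_pow] at this
        have := abs_lt.mp this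
        linarith [this.1]
      have h2 : F (θg (j+1)) < 0 := by
        have := hFj (j+1)
        rw [Odd.neg_one_pow (he.add_one)] at this
        have := abs_lt.mp this
        linarith [this.2]
      have key := intermediate_value_Ioo' (le_of_lt (hθlt j)) hFcont.continuousOn
      obtain ⟨s, hs, hFs⟩ := key (Set.mem_Ioo.mpr ⟨h2, h1⟩)
      exact ⟨s, hs, hFs⟩
    · have h1 : F (θg j) < 0 := by
        have := hFj j
        rw [ho.neg_one_pow] at this
        have := abs_lt.mp this
        linarith [this.2]
      have h2 : 0 < F (θg (j+1)) := by
        have := hFj (j+1)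
        rw [Even.neg_one_pow (ho.add_one)] at this
        have := abs_lt.mp this
        linarith [this.1]
      have key := intermediate_value_Ioo (le_of_lt (hθlt j)) hFcont.continuousOn
      obtain ⟨s, hs, hFs⟩ := key (Set.mem_Ioo.mpr ⟨h1, h2⟩)
      exact ⟨s, hs, hFs⟩
  choose t ht hFt using hroot
  set z : ℕ → ℂ := fun j => Complex.exp (((t j : ℝ):ℂ) * Complex.I) with hzdef
  have hzroot : ∀ j : ℕ, eval (z j) (crPoly N a) = 0 := by
    intro j
    rw [hzdef, heval (t j), hFt j]
    simp
  have habs1 : ∀ j : ℕ, ‖z j‖ = 1 := fun j => Complex.norm_exp_ofReal_mul_I _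
  have htmono : ∀ {i j : ℕ}, i < j → t i < t j := by
    intro i j hij
    have h1 : t i < θg (i+1) := (ht i).2
    have h2 : θg j < t j := (ht j).1
    have h3 : θg (i+1) ≤ θg j := hθle hij
    linarith
  have htlt : ∀ j : ℕ, j < N → 0 < t j ∧ t j < 2*Real.pi := by
    intro j hj
    constructor
    · exact lt_of_le_of_lt (hθ0 j) (ht j).1
    · refine lt_of_lt_of_le (ht j).2 ?_
      rw [← hθtop]
      exact hθle hj
  have hzinj : Set.InjOn z (Finset.range N : Finset ℕ) := by
    intro i hi j hj hij
    simp only [Finset.coe_range, Set.mem_Iio] at hi hj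
    by_contra hne
    have hti : t i ≠ t j := by
      rcases lt_or_gt_of_ne hne with h | h
      · exact ne_of_lt (htmono h)
      · exact ne_of_gt (htmono h)
    obtain ⟨n, hn⟩ := Complex.exp_eq_exp_iff_exists_int.mp hij
    have him := congrArg Complex.im hn
    simp [Complex.add_im, Complex.mul_im, Complex.ofReal_re, Complex.ofReal_im,
      Complex.I_im, Complex.I_re] at him
    -- him : t i = t j + n * (2 * π)  (roughly)
    have hbi := htlt i hi
    have hbj := htlt j hj
    have hn0 : n = 0 := by
      by_contra hn0
      have h1 : (1:ℝ) ≤ |(n:ℝ)| := by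
        rw [← Int.cast_abs]
        exact_mod_cast Int.one_le_abs (by exact_mod_cast hn0)
      have h2 : |(n:ℝ)| * (2*Real.pi) < 2*Real.pi := by
        have : (n:ℝ) * (2*Real.pi) = t i - t j := by linarith [him]
        calc |(n:ℝ)| * (2*Real.pi) = |(n:ℝ) * (2*Real.pi)| := by
              rw [abs_mul, abs_of_pos (by linarith : (0:ℝ) < 2*Real.pi)]
        _ = |t i - t j| := by rw [this]
        _ < 2*Real.pi := abs_sub_lt_of_nonneg_of_lt (le_of_lt hbi.1) hbi.2 (le_of_lt hbj.1) hbj.2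
      nlinarith
    rw [hn0] at him
    simp at him
    exact hti (by linarith [him])
  -- degree facts
  have hqlt : degree (1 + ∑ k ∈ Finset.Icc 1 (N - 1), C (crCoeff N a k) * X ^ (N - k))
      < (N : WithBot ℕ) := by
    refine lt_of_le_of_lt (degree_add_le _ _) (max_lt ?_ ?_)
    · refine lt_of_le_of_lt degree_one_le ?_
      exact_mod_cast (by omega : 0 < N)
    · refine lt_of_le_of_lt (degree_sum_le _ _) ?_
      rw [Finset.sup_lt_iff (by exact WithBot.bot_lt_coe N)]
      intro k hk
      simp only [Finset.mem_Icc] at hk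
      refine lt_of_le_of_lt (degree_C_mul_X_pow_le _ _) ?_
      exact_mod_cast Nat.sub_lt (by omega) (by omega)
  have hmonic : (crPoly N a).Monic := by
    rw [crPoly, add_assoc]
    exact monic_X_pow_add hqlt
  have hdeg : (crPoly N a).natDegree = N := by
    have : degree (crPoly N a) = N := by
      rw [crPoly, add_assoc, degree_add_eq_left_of_degree_lt, degree_X_pow]
      rw [degree_X_pow]
      exact hqlt
    exact natDegree_eq_of_degree_eq_some this
  have hcard : Multiset.card (crPoly N a).roots = N := by
    have := (Polynomial.splits_iff_card_roots.mp
      (IsAlgClosed.splits (crPoly N a)))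
    rw [hdeg] at this
    exact this
  set T : Finset ℂ := (Finset.range N).image z with hT
  have hTcard : T.card = N := by
    rw [hT, Finset.card_image_of_injOn hzinj, Finset.card_range]
  have hTle : T.val ≤ (crPoly N a).roots := by
    rw [Multiset.le_iff_subset T.nodup]
    intro x hx
    rw [hT] at hx
    obtain ⟨j, hj, rfl⟩ := Finset.mem_image.mp (Finset.mem_val.mp hx)
    rw [Polynomial.mem_roots (hmonic.ne_zero)]
    exact hzroot j
  have hTeq : T.val = (crPoly N a).roots := by
    apply Multiset.eq_of_le_of_card_le hTle
    rw [hcard]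
    rw [show Multiset.card T.val = T.card from rfl, hTcard]
  intro w hw
  rw [← hTeq] at hw
  rw [hT] at hw
  obtain ⟨j, hj, rfl⟩ := Finset.mem_image.mp (Finset.mem_val.mp hw)
  exact habs1 j
end

section
/- For every w ∈ W_N one has ‖w‖² ≤ binom(2N, N) − 2, where ‖·‖ is the Euclidean norm on ℝ^{N−1}. Moreover, equality holds if and only if the associated polynomial satisfies w(x) = (x + ζ)^N for some complex number ζ with ζ^N = 1. -/
open Polynomial

section Aux

variable {N : ℕ}

namespace CRAux

/-! Coefficient extraction lemmas for `crPoly`. -/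

variable {a : EuclideanSpace ℝ (Fin (N - 1))}

lemma crPoly_coeff_high (hN : 2 ≤ N) (m : ℕ) (hm : N < m) : (crPoly N a).coeff m = 0 := by
  simp only [crPoly, coeff_add, coeff_X_pow, coeff_one, finset_sum_coeff, coeff_C_mul]
  rw [if_neg (by omega), if_neg (by omega), Finset.sum_eq_zero, add_zero, add_zero]
  intro k hk
  simp only [Finset.mem_Icc] at hk
  rw [if_neg (by omega), mul_zero]

lemma crPoly_coeff_N (hN : 2 ≤ N) : (crPoly N a).coeff N = 1 := by
  simp only [crPoly, coeff_add, coeff_X_pow, coeff_one, finset_sum_coeff, coeff_C_mul]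
  rw [if_pos trivial, if_neg (by omega), Finset.sum_eq_zero, add_zero, add_zero]
  intro k hk
  simp only [Finset.mem_Icc] at hk
  rw [if_neg (by omega), mul_zero]

lemma crPoly_coeff_zero (hN : 2 ≤ N) : (crPoly N a).coeff 0 = 1 := by
  simp only [crPoly, coeff_add, coeff_X_pow, coeff_one, finset_sum_coeff, coeff_C_mul]
  rw [if_neg (by omega), if_pos trivial, Finset.sum_eq_zero, add_zero, zero_add]
  intro k hk
  simp only [Finset.mem_Icc] at hk
  rw [if_neg (by omega), mul_zero]

lemma crPoly_coeff_mid (hN : 2 ≤ N) {k : ℕ} (h1 : 1 ≤ k) (h2 : k ≤ N - 1) :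
    (crPoly N a).coeff (N - k) = crCoeff N a k := by
  simp only [crPoly, coeff_add, coeff_X_pow, coeff_one, finset_sum_coeff, coeff_C_mul]
  rw [if_neg (by omega), if_neg (by omega), zero_add, zero_add,
    Finset.sum_eq_single k (fun j hj hne => ?_) (fun h => absurd (Finset.mem_Icc.2 ⟨h1, h2⟩) h)]
  · rw [if_pos rfl, mul_one]
  · simp only [Finset.mem_Icc] at hj
    rw [if_neg (by omega), mul_zero]

lemma crPoly_natDegree (hN : 2 ≤ N) : (crPoly N a).natDegree = N := by
  have h1 : (crPoly N a).natDegree ≤ N :=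
    natDegree_le_iff_coeff_eq_zero.2 fun m hm => crPoly_coeff_high hN m hm
  have h2 : N ≤ (crPoly N a).natDegree :=
    le_natDegree_of_ne_zero (by rw [crPoly_coeff_N hN]; exact one_ne_zero)
  omega

lemma crPoly_monic (hN : 2 ≤ N) : (crPoly N a).Monic := by
  rw [Monic, leadingCoeff, crPoly_natDegree hN, crPoly_coeff_N hN]

/-! The squared norm of `a` in terms of `crCoeff`. -/

/-- Squared entry, with junk value 0 out of range. -/
noncomputable def sqEnt (a : EuclideanSpace ℝ (Fin (N - 1))) (j : ℕ) : ℝ :=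
  if h : j < N - 1 then (a ⟨j, h⟩) ^ 2 else 0

lemma crCoeff_sq_abs (hN : 2 ≤ N) {k : ℕ} (h1 : 1 ≤ k) (h2 : k ≤ N - 1) :
    (‖crCoeff N a k‖) ^ 2 = (sqEnt a (k - 1) + sqEnt a (N - k - 1)) / 2 := by
  have hs : Complex.normSq ((Real.sqrt 2 : ℝ) : ℂ) = 2 := by
    rw [Complex.normSq_ofReal, Real.mul_self_sqrt (by norm_num)]
  rw [sqEnt, sqEnt, dif_pos (show k - 1 < N - 1 by omega), dif_pos (show N - k - 1 < N - 1 by omega)]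
  rw [crCoeff, dif_pos ⟨h1, h2⟩]
  split_ifs with hlt heq
  · rw [Complex.sq_norm, Complex.normSq_div, hs, Complex.normSq_apply]
    simp only [Complex.add_re, Complex.add_im, Complex.ofReal_re, Complex.ofReal_im,
      Complex.mul_re, Complex.mul_im, Complex.I_re, Complex.I_im]
    ring
  · have hk : N - k - 1 = k - 1 := by omega
    have : (⟨N - k - 1, by omega⟩ : Fin (N - 1)) = ⟨k - 1, by omega⟩ := by
      apply Fin.ext; simp [hk]
    rw [this, Complex.sq_norm, Complex.normSq_ofReal]
    ring
  · rw [Complex.sq_norm, Complex.normSq_div, hs, Complex.normSq_apply]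
    simp only [Complex.sub_re, Complex.sub_im, Complex.ofReal_re, Complex.ofReal_im,
      Complex.mul_re, Complex.mul_im, Complex.I_re, Complex.I_im]
    ring

lemma norm_sq_eq_sum (hN : 2 ≤ N) :
    ‖a‖ ^ 2 = ∑ k ∈ Finset.Icc 1 (N - 1), (‖crCoeff N a k‖) ^ 2 := by
  have key : ∀ k ∈ Finset.Icc 1 (N - 1), (‖crCoeff N a k‖) ^ 2
      = (sqEnt a (k - 1) + sqEnt a (N - k - 1)) / 2 := by
    intro k hk
    simp only [Finset.mem_Icc] at hk
    exact crCoeff_sq_abs hN hk.1 hk.2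
  rw [Finset.sum_congr rfl key]
  have hS1 : ∑ k ∈ Finset.Icc 1 (N - 1), sqEnt a (k - 1)
      = ∑ j ∈ Finset.range (N - 1), sqEnt a j := by
    refine Finset.sum_nbij' (fun k => k - 1) (fun j => j + 1) ?_ ?_ ?_ ?_ ?_ <;>
      intro x hx <;> simp only [Finset.mem_Icc, Finset.mem_range] at * <;> omega
  have hS2 : ∑ k ∈ Finset.Icc 1 (N - 1), sqEnt a (N - k - 1)
      = ∑ k ∈ Finset.Icc 1 (N - 1), sqEnt a (k - 1) := by
    refine Finset.sum_nbij' (fun k => N - k) (fun k => N - k) ?_ ?_ ?_ ?_ ?_ <;>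
      intro x hx <;> simp only [Finset.mem_Icc] at * <;> first | omega | (congr 1; omega)
  have hnorm : ‖a‖ ^ 2 = ∑ j ∈ Finset.range (N - 1), sqEnt a j := by
    rw [← Fin.sum_univ_eq_sum_range (fun j => sqEnt a j) (N - 1)]
    rw [EuclideanSpace.norm_eq, Real.sq_sqrt (by positivity)]
    refine Finset.sum_congr rfl fun i _ => ?_
    rw [sqEnt, dif_pos i.2, Fin.eta, Real.norm_eq_abs, sq_abs]
  have hsplit : ∑ x ∈ Finset.Icc 1 (N - 1), (sqEnt a (x - 1) + sqEnt a (N - x - 1)) / 2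
      = ((∑ x ∈ Finset.Icc 1 (N - 1), sqEnt a (x - 1))
        + ∑ x ∈ Finset.Icc 1 (N - 1), sqEnt a (N - x - 1)) / 2 := by
    rw [← Finset.sum_div, Finset.sum_add_distrib]
  rw [hsplit, hS2, hS1, hnorm]
  ring

/-! Multiset lemmas: triangle inequality for `esymm` and its equality case. -/

lemma esymm_abs_le (s : Multiset ℂ) (h : ∀ z ∈ s, ‖z‖ = 1) (k : ℕ) :
    ‖s.esymm k‖ ≤ (Multiset.card s).choose k := by
  rw [Multiset.esymm]
  calc ‖((s.powersetCard k).map Multiset.prod).sum‖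
      ≤ (((s.powersetCard k).map Multiset.prod).map norm).sum := norm_multiset_sum_le _
    _ = ((Multiset.card s).choose k : ℝ) := by
        rw [Multiset.map_map]
        have hrep : (s.powersetCard k).map (norm ∘ Multiset.prod)
            = Multiset.replicate (Multiset.card (s.powersetCard k)) (1 : ℝ) := by
          rw [Multiset.eq_replicate]
          refine ⟨by rw [Multiset.card_map], fun b hb => ?_⟩
          obtain ⟨t, ht, rfl⟩ := Multiset.mem_map.1 hb
          obtain ⟨hts, -⟩ := Multiset.mem_powersetCard.1 ht
          simp only [Function.comp_apply]
          rw [show ‖t.prod‖ = (t.map norm).prod from map_multiset_prod (normHom (α := ℂ)) t]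
          exact Multiset.prod_eq_one fun x hx => by
            obtain ⟨z, hz, rfl⟩ := Multiset.mem_map.1 hx
            exact h z (Multiset.mem_of_le hts hz)
        rw [hrep, Multiset.sum_replicate, Multiset.card_powersetCard, nsmul_eq_mul, mul_one]

lemma mul_card_eq_sum (s : Multiset ℂ) (h1 : ∀ z ∈ s, ‖z‖ = 1)
    (h2 : ‖s.sum‖ = Multiset.card s) :
    ∀ u ∈ s, (Multiset.card s : ℂ) * u = s.sum := by
  intro u hu
  obtain ⟨t, rfl⟩ : ∃ t, s = u ::ₘ t := ⟨s.erase u, (Multiset.cons_erase hu).symm⟩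
  have hu1 : ‖u‖ = 1 := h1 u (Multiset.mem_cons_self u t)
  have hun : ‖u‖ = 1 := by rw [hu1]
  have htnorm : (t.map norm).sum = (Multiset.card t : ℝ) := by
    rw [Multiset.eq_replicate.2 ⟨Multiset.card_map _ _, fun b hb => by
      obtain ⟨z, hz, rfl⟩ := Multiset.mem_map.1 hb
      exact h1 z (Multiset.mem_cons_of_mem hz)⟩,
      Multiset.sum_replicate, nsmul_eq_mul, mul_one]
  have ht : ‖t.sum‖ ≤ (Multiset.card t : ℝ) := htnorm ▸ norm_multiset_sum_le t
  have hsum : ‖u + t.sum‖ = (Multiset.card t : ℝ) + 1 := by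
    have := h2
    rw [Multiset.sum_cons, Multiset.card_cons] at this
    rw [this]; push_cast; ring
  have h' : ‖t.sum‖ = (Multiset.card t : ℝ) := by
    have := norm_add_le u t.sum
    rw [hsum, hun] at this
    linarith
  have hray : SameRay ℝ u t.sum := by
    rw [sameRay_iff_norm_add, hsum, hun, h']; ring
  have hu0 : u ≠ 0 := by
    intro h0; rw [h0, norm_zero] at hu1; norm_num at hu1
  obtain ⟨r, hr0, hru⟩ := hray.exists_nonneg_left hu0
  have hr : r = (Multiset.card t : ℝ) := by
    have : ‖r • u‖ = ‖t.sum‖ := by rw [hru]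
    rw [norm_smul, hun, mul_one, Real.norm_eq_abs, abs_of_nonneg hr0, h'] at this
    exact this
  rw [Multiset.sum_cons, Multiset.card_cons, ← hru, hr]
  push_cast [Complex.real_smul]
  ring

/-! Vandermonde. -/

lemma choose_sq_sum (N : ℕ) (hN : 2 ≤ N) :
    (∑ k ∈ Finset.Icc 1 (N - 1), (N.choose k) ^ 2) + 2 = (2 * N).choose N := by
  rw [two_mul, Nat.add_choose_eq, Finset.Nat.sum_antidiagonal_eq_sum_range_succ_mk]
  have hc : ∀ k ∈ Finset.range (N + 1), N.choose k * N.choose (N - k) = N.choose k ^ 2 := by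
    intro k hk
    simp only [Finset.mem_range] at hk
    rw [Nat.choose_symm (by omega), sq]
  rw [Finset.sum_congr rfl hc]
  have hset : Finset.range (N + 1) = insert 0 (insert N (Finset.Icc 1 (N - 1))) := by
    ext x; simp only [Finset.mem_range, Finset.mem_insert, Finset.mem_Icc]; omega
  rw [hset, Finset.sum_insert (by simp only [Finset.mem_insert, Finset.mem_Icc]; omega),
    Finset.sum_insert (by simp only [Finset.mem_Icc]; omega), Nat.choose_zero_right,
    Nat.choose_self]
  ring

lemma choose_sq_sum_real (N : ℕ) (hN : 2 ≤ N) :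
    ((2 * N).choose N : ℝ) - 2 = ∑ k ∈ Finset.Icc 1 (N - 1), ((N.choose k : ℝ)) ^ 2 := by
  rw [← choose_sq_sum N hN]
  push_cast
  ring

end CRAux

end Aux

open CRAux in
/-- For every `w ∈ W_N`, `‖w‖² ≤ binom(2N, N) - 2`, with equality if and only if the
associated polynomial is `(x + ζ)^N` for some `N`-th root of unity `ζ`. -/
theorem WSet_norm_sq_le (N : ℕ) (hN : 2 ≤ N) (w : EuclideanSpace ℝ (Fin (N - 1)))
    (hw : w ∈ WSet N) :
    ‖w‖ ^ 2 ≤ ((2 * N).choose N : ℝ) - 2 ∧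
      (‖w‖ ^ 2 = ((2 * N).choose N : ℝ) - 2 ↔
        ∃ ζ : ℂ, ζ ^ N = 1 ∧ crPoly N w = (X + C ζ) ^ N) := by
  have hN0 : N ≠ 0 := by omega
  set p := crPoly N w with hp
  have hM : p.Monic := crPoly_monic hN
  have hdeg : p.natDegree = N := crPoly_natDegree hN
  have hcard : Multiset.card p.roots = N := by
    rw [← hdeg]
    exact (splits_iff_card_roots).1 (IsAlgClosed.splits p)
  have hroots1 : ∀ z ∈ p.roots, ‖z‖ = 1 := hw
  -- |c_k| = |esymm k| for k in range
  have habs : ∀ k ∈ Finset.Icc 1 (N - 1),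
      ‖crCoeff N w k‖ = ‖p.roots.esymm k‖ := by
    intro k hk
    simp only [Finset.mem_Icc] at hk
    have hkk : N - (N - k) = k := by omega
    have hv := Polynomial.coeff_eq_esymm_roots_of_card (p := p)
      (hcard.trans hdeg.symm) (k := N - k) (by omega)
    rw [hdeg, hkk, hM.leadingCoeff, one_mul] at hv
    rw [← crPoly_coeff_mid hN hk.1 hk.2, ← hp, hv, norm_mul, norm_pow]
    simp
  have hbound : ∀ k ∈ Finset.Icc 1 (N - 1),
      (‖crCoeff N w k‖) ^ 2 ≤ ((N.choose k : ℝ)) ^ 2 := by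
    intro k hk
    have h1 := esymm_abs_le p.roots hroots1 k
    rw [hcard] at h1
    rw [habs k hk]
    exact pow_le_pow_left₀ (norm_nonneg _) h1 2
  have hle : ‖w‖ ^ 2 ≤ ((2 * N).choose N : ℝ) - 2 := by
    rw [norm_sq_eq_sum hN, choose_sq_sum_real N hN]
    exact Finset.sum_le_sum hbound
  refine ⟨hle, ⟨?_, ?_⟩⟩
  · -- forward: equality implies p = (X + C ζ)^N
    intro heq
    have hall : ∀ k ∈ Finset.Icc 1 (N - 1),
        (‖crCoeff N w k‖) ^ 2 = ((N.choose k : ℝ)) ^ 2 := by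
      rw [norm_sq_eq_sum hN, choose_sq_sum_real N hN] at heq
      exact (Finset.sum_eq_sum_iff_of_le hbound).1 heq
    have h1mem : (1 : ℕ) ∈ Finset.Icc 1 (N - 1) := Finset.mem_Icc.2 ⟨le_refl 1, by omega⟩
    have h1 : ‖p.roots.esymm 1‖ = (N : ℝ) := by
      have h2 := hall 1 h1mem
      rw [habs 1 h1mem, Nat.choose_one_right] at h2
      have := congrArg Real.sqrt h2
      rwa [Real.sqrt_sq (norm_nonneg _), Real.sqrt_sq (Nat.cast_nonneg N)] at this
    have hes : p.roots.esymm 1 = p.roots.sum := by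
      rw [Multiset.esymm, Multiset.powersetCard_one, Multiset.map_map]
      simp
    have hsum : ‖p.roots.sum‖ = Multiset.card p.roots := by
      rw [← hes, h1, hcard]
    have hmul := mul_card_eq_sum p.roots hroots1 hsum
    set α : ℂ := p.roots.sum / (N : ℂ) with hα
    have hNc : (N : ℂ) ≠ 0 := Nat.cast_ne_zero.2 hN0
    have hrep : p.roots = Multiset.replicate N α := by
      rw [← hcard]
      refine Multiset.eq_replicate_card.2 fun b hb => ?_
      have hb' := hmul b hb
      rw [hcard] at hb'
      rw [hα]
      field_simp
      linear_combination hb'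
    have hprod : p = (X - C α) ^ N := by
      conv_lhs => rw [← prod_multiset_X_sub_C_of_monic_of_roots_card_eq hM
        (hcard.trans hdeg.symm)]
      rw [hrep, Multiset.map_replicate, Multiset.prod_replicate]
    have hXC : X - C α = X + C (-α) := by rw [map_neg, sub_eq_add_neg]
    refine ⟨-α, ?_, ?_⟩
    · have h0 : p.coeff 0 = 1 := crPoly_coeff_zero hN
      rw [hprod, hXC, coeff_X_add_C_pow] at h0
      simpa using h0
    · rw [hprod, hXC]
  · -- backward
    rintro ⟨ζ, hζ1, hpe⟩
    have hζa : ‖ζ‖ = 1 := by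
      have h := congrArg norm hζ1
      rw [norm_pow, norm_one] at h
      have hnn := norm_nonneg ζ
      rcases lt_trichotomy (‖ζ‖) 1 with hlt | he | hgt
      · exfalso
        have := pow_lt_one₀ hnn hlt hN0
        rw [h] at this; exact lt_irrefl 1 this
      · exact he
      · exfalso
        have := one_lt_pow₀ hgt hN0
        rw [h] at this; exact lt_irrefl 1 this
    have hco : ∀ k ∈ Finset.Icc 1 (N - 1),
        ‖crCoeff N w k‖ = (N.choose k : ℝ) := by
      intro k hk
      simp only [Finset.mem_Icc] at hk
      have hmid := crPoly_coeff_mid hN hk.1 hk.2 (a := w)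
      rw [← hp, hpe, coeff_X_add_C_pow] at hmid
      rw [← hmid, norm_mul, norm_pow, hζa, one_pow, one_mul, Complex.norm_natCast]
      norm_cast
      exact Nat.choose_symm (by omega)
    rw [norm_sq_eq_sum hN, choose_sq_sum_real N hN]
    exact Finset.sum_congr rfl fun k hk => by rw [hco k hk]
end

section
/- Let ζ_N = e^{2πi/N}. Define maps R and C on W_N as follows: for w ∈ W_N with w(x) = ∏_{n=1}^N (x − ξ_n), R·w is the element of W_N whose associated polynomial is ∏_{n=1}^N (x − ζ_N ξ_n) (equivalently w(ζ_N^{−1} x)), and C·w is the element of W_N whose associated polynomial is ∏_{n=1}^N (x − conj(ξ_n)) (equivalently the polynomial obtained from w(x) by conjugating all coefficients). Then R and C are well-defined maps from W_N to W_N, and for all w₁, w₂ ∈ W_N, ‖R·w₁ − R·w₂‖ = ‖w₁ − w₂‖ and ‖C·w₁ − C·w₂‖ = ‖w₁ − w₂‖. -/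
open Polynomial

/-! ### Auxiliary definitions -/

noncomputable def rmFun (N : ℕ) (a : EuclideanSpace ℝ (Fin (N - 1))) :
    EuclideanSpace ℝ (Fin (N - 1)) :=
  WithLp.toLp 2 fun j => Real.cos (2 * Real.pi * (j.1 + 1) / N) * a j
    - Real.sin (2 * Real.pi * (j.1 + 1) / N) * a ⟨N - 2 - j.1, by have := j.2; omega⟩

noncomputable def cmFun (N : ℕ) (a : EuclideanSpace ℝ (Fin (N - 1))) :
    EuclideanSpace ℝ (Fin (N - 1)) :=
  WithLp.toLp 2 fun j => if 2 * (j.1 + 1) ≤ N then a j else - a j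

lemma crPoly_eval_zero (N : ℕ) (hN : 2 ≤ N) (a : EuclideanSpace ℝ (Fin (N - 1))) :
    (crPoly N a).eval 0 = 1 := by
  simp only [crPoly, eval_add, eval_pow, eval_X, eval_one, eval_finset_sum, eval_mul, eval_C]
  rw [Finset.sum_eq_zero, zero_pow (by omega)]
  · ring
  · intro k hk
    simp only [Finset.mem_Icc] at hk
    rw [zero_pow (by omega)]
    ring

lemma crPoly_ne_zero (N : ℕ) (hN : 2 ≤ N) (a : EuclideanSpace ℝ (Fin (N - 1))) :
    crPoly N a ≠ 0 := by
  intro h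
  have := crPoly_eval_zero N hN a
  rw [h] at this
  simp at this

/-! ### The conjugation map -/

lemma crCoeff_cm (N : ℕ) (a : EuclideanSpace ℝ (Fin (N - 1))) (k : ℕ) :
    crCoeff N (cmFun N a) k = starRingEnd ℂ (crCoeff N a k) := by
  unfold crCoeff
  split
  · rename_i h
    obtain ⟨hk1, hk2⟩ := h
    split
    · rename_i hlt
      have e1 : cmFun N a ⟨k - 1, by omega⟩ = a ⟨k - 1, by omega⟩ := by
        simp only [cmFun, WithLp.ofLp_toLp]; rw [if_pos (by omega)]
      have e2 : cmFun N a ⟨N - k - 1, by omega⟩ = - a ⟨N - k - 1, by omega⟩ := by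
        simp only [cmFun, WithLp.ofLp_toLp]; rw [if_neg (by omega)]
      rw [e1, e2]
      push_cast
      simp only [map_div₀, map_add, map_mul, Complex.conj_ofReal, Complex.conj_I]
      ring
    · split
      · rename_i h1 h2
        have e1 : cmFun N a ⟨k - 1, by omega⟩ = a ⟨k - 1, by omega⟩ := by
          simp only [cmFun, WithLp.ofLp_toLp]; rw [if_pos (by omega)]
        rw [e1, Complex.conj_ofReal]
      · rename_i h1 h2
        have e1 : cmFun N a ⟨N - k - 1, by omega⟩ = a ⟨N - k - 1, by omega⟩ := by
          simp only [cmFun, WithLp.ofLp_toLp]; rw [if_pos (by omega)]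
        have e2 : cmFun N a ⟨k - 1, by omega⟩ = - a ⟨k - 1, by omega⟩ := by
          simp only [cmFun, WithLp.ofLp_toLp]; rw [if_neg (by omega)]
        rw [e1, e2]
        push_cast
        simp only [map_div₀, map_sub, map_mul, Complex.conj_ofReal, Complex.conj_I]
        ring
  · simp

lemma crPoly_cm (N : ℕ) (a : EuclideanSpace ℝ (Fin (N - 1))) :
    crPoly N (cmFun N a) = (crPoly N a).map (starRingEnd ℂ) := by
  simp only [crPoly, Polynomial.map_add, Polynomial.map_pow, Polynomial.map_one,
    Polynomial.map_X, Polynomial.map_sum, Polynomial.map_mul, map_C]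
  congr 1
  exact Finset.sum_congr rfl fun k _ => by rw [crCoeff_cm N a k]

lemma cm_mem (N : ℕ) (hN : 2 ≤ N) (a : EuclideanSpace ℝ (Fin (N - 1))) (ha : a ∈ WSet N) :
    cmFun N a ∈ WSet N := by
  intro z hz
  rw [crPoly_cm] at hz
  rw [mem_roots'] at hz
  obtain ⟨hne, hroot⟩ := hz
  have h0 : (crPoly N a).eval (starRingEnd ℂ z) = 0 := by
    have h1 : Polynomial.eval₂ (starRingEnd ℂ) z (crPoly N a) = 0 := by
      rwa [IsRoot, Polynomial.eval_map] at hroot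
    have h2 : Polynomial.eval₂ (starRingEnd ℂ) (starRingEnd ℂ (starRingEnd ℂ z))
        (crPoly N a) = 0 := by simpa using h1
    rw [Polynomial.eval₂_hom] at h2
    simpa using h2
  have hmem : starRingEnd ℂ z ∈ (crPoly N a).roots := by
    rw [mem_roots']
    exact ⟨crPoly_ne_zero N hN a, h0⟩
  have := ha _ hmem
  rwa [Complex.norm_conj] at this

lemma cm_sub (N : ℕ) (a b : EuclideanSpace ℝ (Fin (N - 1))) :
    cmFun N (a - b) = cmFun N a - cmFun N b := by
  ext j
  simp only [cmFun, PiLp.sub_apply, WithLp.ofLp_toLp]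
  split_ifs <;> ring

lemma cm_norm (N : ℕ) (v : EuclideanSpace ℝ (Fin (N - 1))) : ‖cmFun N v‖ = ‖v‖ := by
  rw [EuclideanSpace.norm_eq, EuclideanSpace.norm_eq]
  congr 1
  refine Finset.sum_congr rfl fun j _ => ?_
  simp only [cmFun, WithLp.ofLp_toLp]
  split_ifs <;> simp

/-! ### The rotation map -/

lemma zeta_pow (N : ℕ) (hN : 2 ≤ N) (k : ℕ) (hk1 : 1 ≤ k) (hk2 : k ≤ N - 1) :
    (Complex.exp (2 * Real.pi * Complex.I / N))⁻¹ ^ (N - k)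
      = Complex.exp (2 * Real.pi * Complex.I * k / N) := by
  have hNne : (N : ℂ) ≠ 0 := Nat.cast_ne_zero.mpr (by omega)
  rw [← Complex.exp_neg, ← Complex.exp_nat_mul]
  rw [show ((N - k : ℕ) : ℂ) * -(2 * Real.pi * Complex.I / N)
      = 2 * Real.pi * Complex.I * k / N - 2 * Real.pi * Complex.I by
    push_cast [Nat.cast_sub (show k ≤ N by omega)]
    field_simp
    ring]
  rw [Complex.exp_sub, Complex.exp_two_pi_mul_I, div_one]

lemma rmFun_apply (N : ℕ) (a : EuclideanSpace ℝ (Fin (N - 1))) (m : ℕ)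
    (h1 : 1 ≤ m) (h2 : m ≤ N - 1) (j jp : Fin (N - 1))
    (hj : j.1 = m - 1) (hjp : jp.1 = N - m - 1) :
    rmFun N a j = Real.cos (2 * Real.pi * m / N) * a j
      - Real.sin (2 * Real.pi * m / N) * a jp := by
  have key : rmFun N a j = Real.cos (2 * Real.pi * (j.1 + 1) / N) * a j
      - Real.sin (2 * Real.pi * (j.1 + 1) / N) * a ⟨N - 2 - j.1, by have := j.2; omega⟩ := rfl
  have hval : N - 2 - j.1 = jp.1 := by have := j.2; omega
  have e2 : (⟨N - 2 - j.1, by have := j.2; omega⟩ : Fin (N - 1)) = jp := Fin.ext hval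
  have e1 : ((j.1 : ℝ) + 1) = (m : ℝ) := by
    have h' : ((j.1 : ℕ) : ℝ) = (m : ℝ) - 1 := by
      rw [hj]; push_cast [Nat.cast_sub h1]; ring
    rw [h']; ring
  rw [key, e2, e1]

lemma rm_angle (N : ℕ) (hN : 2 ≤ N) (k : ℕ) (hk1 : 1 ≤ k) (hk2 : k ≤ N - 1) :
    Real.cos (2 * Real.pi * (N - k : ℕ) / N) = Real.cos (2 * Real.pi * k / N)
    ∧ Real.sin (2 * Real.pi * (N - k : ℕ) / N) = - Real.sin (2 * Real.pi * k / N) := by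
  have hNne : (N : ℝ) ≠ 0 := Nat.cast_ne_zero.mpr (by omega)
  have harg : 2 * Real.pi * ((N - k : ℕ) : ℝ) / N = 2 * Real.pi - 2 * Real.pi * k / N := by
    push_cast [Nat.cast_sub (show k ≤ N by omega)]
    field_simp
  rw [harg, Real.cos_sub, Real.sin_sub]
  simp [Real.cos_two_pi, Real.sin_two_pi]

lemma exp_eq (N : ℕ) (hN : 2 ≤ N) (k : ℕ) :
    Complex.exp (2 * Real.pi * Complex.I * k / N)
      = (Real.cos (2 * Real.pi * k / N) : ℝ) + (Real.sin (2 * Real.pi * k / N) : ℝ) * Complex.I := by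
  rw [show (2 * Real.pi * Complex.I * k / N : ℂ) = ((2 * Real.pi * k / N : ℝ) : ℂ) * Complex.I by
    push_cast; ring]
  rw [Complex.exp_mul_I, Complex.ofReal_cos, Complex.ofReal_sin]

lemma crCoeff_rm (N : ℕ) (hN : 2 ≤ N) (a : EuclideanSpace ℝ (Fin (N - 1))) (k : ℕ)
    (hk1 : 1 ≤ k) (hk2 : k ≤ N - 1) :
    crCoeff N (rmFun N a) k
      = crCoeff N a k * Complex.exp (2 * Real.pi * Complex.I * k / N) := by
  rw [exp_eq N hN k]
  unfold crCoeff
  rw [dif_pos ⟨hk1, hk2⟩, dif_pos ⟨hk1, hk2⟩]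
  obtain ⟨hc, hs⟩ := rm_angle N hN k hk1 hk2
  split
  · rename_i hlt
    rw [rmFun_apply N a k hk1 hk2 ⟨k - 1, by omega⟩ ⟨N - k - 1, by omega⟩ rfl rfl,
        rmFun_apply N a (N - k) (by omega) (by omega) ⟨N - k - 1, by omega⟩ ⟨k - 1, by omega⟩
          rfl (show k - 1 = N - (N - k) - 1 by omega), hc, hs]
    push_cast
    linear_combination (-((a ⟨N - k - 1, by omega⟩ : ℂ) * Complex.sin (2 * (Real.pi : ℂ) * k / N))
      / ((Real.sqrt 2 : ℝ) : ℂ)) * Complex.I_sq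
  · split
    · rename_i h1 h2
      rw [rmFun_apply N a k hk1 hk2 ⟨k - 1, by omega⟩ ⟨N - k - 1, by omega⟩ rfl rfl]
      have hpi : 2 * Real.pi * (k : ℝ) / N = Real.pi := by
        have : (N : ℝ) = 2 * k := by exact_mod_cast h2.symm
        rw [this]
        have : (k : ℝ) ≠ 0 := Nat.cast_ne_zero.mpr (by omega)
        field_simp
      have hidx : (⟨N - k - 1, by omega⟩ : Fin (N - 1)) = ⟨k - 1, by omega⟩ :=
        Fin.ext (show N - k - 1 = k - 1 by omega)
      rw [hpi, Real.cos_pi, Real.sin_pi, hidx]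
      push_cast
      ring
    · rename_i h1 h2
      rw [rmFun_apply N a k hk1 hk2 ⟨k - 1, by omega⟩ ⟨N - k - 1, by omega⟩ rfl rfl,
          rmFun_apply N a (N - k) (by omega) (by omega) ⟨N - k - 1, by omega⟩ ⟨k - 1, by omega⟩
            rfl (show k - 1 = N - (N - k) - 1 by omega), hc, hs]
      push_cast
      linear_combination (((a ⟨k - 1, by omega⟩ : ℂ) * Complex.sin (2 * (Real.pi : ℂ) * k / N))
        / ((Real.sqrt 2 : ℝ) : ℂ)) * Complex.I_sq

lemma crPoly_rm (N : ℕ) (hN : 2 ≤ N) (a : EuclideanSpace ℝ (Fin (N - 1))) :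
    crPoly N (rmFun N a) =
      (crPoly N a).comp (C (Complex.exp (2 * Real.pi * Complex.I / N))⁻¹ * X) := by
  set u : ℂ := (Complex.exp (2 * Real.pi * Complex.I / N))⁻¹ with hu
  have hNne : (N : ℂ) ≠ 0 := Nat.cast_ne_zero.mpr (by omega)
  have huN : u ^ N = 1 := by
    rw [hu, inv_pow, ← Complex.exp_nat_mul,
      show (N : ℂ) * (2 * Real.pi * Complex.I / N) = 2 * Real.pi * Complex.I by field_simp,
      Complex.exp_two_pi_mul_I, inv_one]
  have hsum : ∀ (s : Finset ℕ) (f : ℕ → ℂ[X]) (q : ℂ[X]),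
      (∑ i ∈ s, f i).comp q = ∑ i ∈ s, (f i).comp q := fun s f q => by
    simp [Polynomial.comp, Polynomial.eval₂_finset_sum]
  rw [crPoly, crPoly, add_comp, add_comp, one_comp, X_pow_comp, hsum]
  rw [mul_pow, ← C_pow, huN, map_one, one_mul]
  congr 1
  refine Finset.sum_congr rfl fun k hk => ?_
  simp only [Finset.mem_Icc] at hk
  rw [mul_comp, C_comp, X_pow_comp, mul_pow, ← C_pow, ← mul_assoc, ← C_mul,
    zeta_pow N hN k hk.1 hk.2, crCoeff_rm N hN a k hk.1 hk.2]

lemma rm_mem (N : ℕ) (hN : 2 ≤ N) (a : EuclideanSpace ℝ (Fin (N - 1))) (ha : a ∈ WSet N) :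
    rmFun N a ∈ WSet N := by
  intro z hz
  rw [crPoly_rm N hN] at hz
  rw [mem_roots'] at hz
  obtain ⟨hne, hroot⟩ := hz
  set u : ℂ := (Complex.exp (2 * Real.pi * Complex.I / N))⁻¹ with hu
  have h0 : (crPoly N a).eval (u * z) = 0 := by
    have := hroot
    rwa [IsRoot, eval_comp, eval_mul, eval_C, eval_X] at this
  have hmem : u * z ∈ (crPoly N a).roots := by
    rw [mem_roots']
    exact ⟨crPoly_ne_zero N hN a, h0⟩
  have habs := ha _ hmem
  have huabs : ‖u‖ = 1 := by
    rw [hu, norm_inv,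
      show (2 * Real.pi * Complex.I / N : ℂ) = ((2 * Real.pi / N : ℝ) : ℂ) * Complex.I by
        push_cast; ring,
      Complex.norm_exp_ofReal_mul_I, inv_one]
  rw [norm_mul, huabs, one_mul] at habs
  exact habs

lemma rm_sub (N : ℕ) (a b : EuclideanSpace ℝ (Fin (N - 1))) :
    rmFun N (a - b) = rmFun N a - rmFun N b := by
  ext j
  simp only [rmFun, PiLp.sub_apply, WithLp.ofLp_toLp]
  ring

noncomputable def rmInv (N : ℕ) : Fin (N - 1) → Fin (N - 1) :=
  fun j => ⟨N - 2 - j.1, by have := j.2; omega⟩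

lemma rmInv_invol (N : ℕ) : Function.Involutive (rmInv N) := by
  intro j
  have := j.2
  exact Fin.ext (by simp only [rmInv]; omega)

lemma rm_norm (N : ℕ) (v : EuclideanSpace ℝ (Fin (N - 1))) : ‖rmFun N v‖ = ‖v‖ := by
  rw [EuclideanSpace.norm_eq, EuclideanSpace.norm_eq]
  congr 1
  simp only [Real.norm_eq_abs, sq_abs]
  set e : Equiv.Perm (Fin (N - 1)) := (rmInv_invol N).toPerm with he
  set t : Fin (N - 1) → ℝ := fun j => (rmFun N v j) ^ 2 with ht
  have hre : ∀ (g : Fin (N - 1) → ℝ), ∑ j, g (rmInv N j) = ∑ j, g j := by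
    intro g
    exact Equiv.sum_comp e g
  have hpair : ∀ j : Fin (N - 1), t j + t (rmInv N j) = (v j) ^ 2 + (v (rmInv N j)) ^ 2 := by
    intro j
    have hj2 := j.2
    have hang : 2 * Real.pi * (((rmInv N j).1 : ℝ) + 1) / N
        = 2 * Real.pi - 2 * Real.pi * ((j.1 : ℝ) + 1) / N := by
      have hNne : (N : ℝ) ≠ 0 := Nat.cast_ne_zero.mpr (by omega)
      simp only [rmInv]
      push_cast [Nat.cast_sub (show j.1 ≤ N - 2 by omega), Nat.cast_sub (show 2 ≤ N by omega)]
      field_simp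
      ring
    have hvv : rmInv N (rmInv N j) = j := rmInv_invol N j
    have h2 : rmFun N v (rmInv N j)
        = Real.cos (2 * Real.pi * ((j.1 : ℝ) + 1) / N) * v (rmInv N j)
          + Real.sin (2 * Real.pi * ((j.1 : ℝ) + 1) / N) * v j := by
      show Real.cos _ * _ - Real.sin _ * v ⟨N - 2 - (rmInv N j).1, _⟩ = _
      have : (⟨N - 2 - (rmInv N j).1, by have := (rmInv N j).2; omega⟩ : Fin (N - 1)) = j := by
        have := hvv
        simp only [rmInv] at this ⊢
        exact this
      rw [this, hang, Real.cos_sub, Real.sin_sub, Real.cos_two_pi, Real.sin_two_pi]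
      ring
    have h1 : rmFun N v j
        = Real.cos (2 * Real.pi * ((j.1 : ℝ) + 1) / N) * v j
          - Real.sin (2 * Real.pi * ((j.1 : ℝ) + 1) / N) * v (rmInv N j) := rfl
    rw [ht]
    simp only [h1, h2]
    linear_combination ((v j) ^ 2 + (v (rmInv N j)) ^ 2)
      * Real.sin_sq_add_cos_sq (2 * Real.pi * ((j.1 : ℝ) + 1) / N)
  have key : ∑ j, t j = ∑ j, (v j) ^ 2 := by
    have h2t : 2 * ∑ j, t j = 2 * ∑ j, (v j) ^ 2 := by
      calc 2 * ∑ j, t j = ∑ j, t j + ∑ j, t (rmInv N j) := by rw [hre t]; ring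
      _ = ∑ j, (t j + t (rmInv N j)) := by rw [← Finset.sum_add_distrib]
      _ = ∑ j, ((v j) ^ 2 + (v (rmInv N j)) ^ 2) := Finset.sum_congr rfl fun j _ => hpair j
      _ = ∑ j, (v j) ^ 2 + ∑ j, (v (rmInv N j)) ^ 2 := Finset.sum_add_distrib
      _ = 2 * ∑ j, (v j) ^ 2 := by rw [hre (fun j => (v j) ^ 2)]; ring
    linarith
  exact key

/-! ### Main theorem -/

/-- The maps `R` (multiplying every root by `ζ_N = e^{2πi/N}`, i.e. `w(x) ↦ w(ζ_N⁻¹ x)`) and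
`C` (conjugating the roots, i.e. conjugating all coefficients) are well-defined maps
`W_N → W_N`, and both are isometries of `W_N`. -/
theorem WSet_rotation_conjugation_isometries (N : ℕ) (hN : 2 ≤ N) :
    ∃ Rm Cm : WSet N → WSet N,
      (∀ w : WSet N,
          crPoly N (Rm w : EuclideanSpace ℝ (Fin (N - 1))) =
            (crPoly N (w : EuclideanSpace ℝ (Fin (N - 1)))).comp
              (C (Complex.exp (2 * Real.pi * Complex.I / N))⁻¹ * X)) ∧
      (∀ w : WSet N,
          crPoly N (Cm w : EuclideanSpace ℝ (Fin (N - 1))) =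
            (crPoly N (w : EuclideanSpace ℝ (Fin (N - 1)))).map (starRingEnd ℂ)) ∧
      (∀ w₁ w₂ : WSet N,
          ‖(Rm w₁ : EuclideanSpace ℝ (Fin (N - 1))) - (Rm w₂ : EuclideanSpace ℝ (Fin (N - 1)))‖ =
            ‖(w₁ : EuclideanSpace ℝ (Fin (N - 1))) - (w₂ : EuclideanSpace ℝ (Fin (N - 1)))‖) ∧
      (∀ w₁ w₂ : WSet N,
          ‖(Cm w₁ : EuclideanSpace ℝ (Fin (N - 1))) - (Cm w₂ : EuclideanSpace ℝ (Fin (N - 1)))‖ =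
            ‖(w₁ : EuclideanSpace ℝ (Fin (N - 1))) - (w₂ : EuclideanSpace ℝ (Fin (N - 1)))‖) := by
  refine ⟨fun w => ⟨rmFun N w.1, rm_mem N hN w.1 w.2⟩,
    fun w => ⟨cmFun N w.1, cm_mem N hN w.1 w.2⟩, ?_, ?_, ?_, ?_⟩
  · exact fun w => crPoly_rm N hN w.1
  · exact fun w => crPoly_cm N w.1
  · intro w₁ w₂
    rw [← rm_sub, rm_norm]
  · intro w₁ w₂
    rw [← cm_sub, cm_norm]
end

section
/- For all 1 ≤ m, m' ≤ N with m ≠ m', ‖v_m − v_{m'}‖² = ‖v_N − v_k‖² where k = |m' − m|. Moreover: if 1 ≤ j < k ≤ N/2 and j, k are both even, then ‖v_N − v_j‖² < ‖v_N − v_k‖² < 2·binom(2N, N); and if 1 ≤ j < k ≤ N/2 and j, k are both odd, then ‖v_N − v_j‖² > ‖v_N − v_k‖² > 2·binom(2N, N). -/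
open Polynomial

section CRAuxLemmas
open Finset

lemma coeff_one_add_C_mul_X_pow (b : ℂ) (n i : ℕ) :
    ((1 + C b * X : ℂ[X]) ^ n).coeff i = (n.choose i : ℂ) * b ^ i := by
  rw [add_comm (1 : ℂ[X]) (C b * X), add_pow, finset_sum_coeff]
  have h : ∀ a ∈ Finset.range (n+1),
      ((C b * X) ^ a * 1 ^ (n - a) * ((n.choose a : ℕ) : ℂ[X])).coeff i
        = if i = a then ((n.choose a : ℂ) * b ^ a) else 0 := by
    intro a _
    rw [one_pow, mul_one, mul_pow, ← C_pow, ← C_eq_natCast, mul_comm, ← mul_assoc,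
      ← C_mul, coeff_C_mul, coeff_X_pow, mul_ite, mul_one, mul_zero]
  rw [Finset.sum_congr rfl h, Finset.sum_ite_eq (Finset.range (n+1)) i]
  by_cases hi : i ∈ Finset.range (n+1)
  · simp [hi]
  · simp only [hi, if_false]
    rw [Nat.choose_eq_zero_of_lt (by simpa using hi)]
    simp

lemma coeff_one_add_X_sq_pow (m : ℕ) :
    ((1 + X ^ 2 : ℂ[X]) ^ m).coeff m = if Even m then ((m.choose (m/2) : ℕ) : ℂ) else 0 := by
  rw [add_comm (1 : ℂ[X]) (X ^ 2), add_pow, finset_sum_coeff]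
  have h : ∀ a ∈ Finset.range (m+1),
      ((X ^ 2) ^ a * 1 ^ (m - a) * ((m.choose a : ℕ) : ℂ[X])).coeff m
        = if m = 2 * a then ((m.choose a : ℂ)) else 0 := by
    intro a _
    rw [one_pow, mul_one, ← pow_mul, ← C_eq_natCast, mul_comm, coeff_C_mul, coeff_X_pow,
      mul_ite, mul_one, mul_zero, mul_comm 2 a]
  rw [Finset.sum_congr rfl h]
  by_cases he : Even m
  · obtain ⟨c, hc⟩ := id he
    have hm : m = 2 * (m / 2) := by omega
    rw [Finset.sum_eq_single (m / 2), if_pos hm, if_pos he]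
    · intro a _ ha
      rw [if_neg]; omega
    · intro h'; exact absurd (Finset.mem_range.2 (by omega)) h'
  · rw [if_neg he, Finset.sum_eq_zero]
    intro a _
    rw [if_neg]; intro h'; exact he ⟨a, by omega⟩

lemma coeff_trinomial (b : ℂ) (N : ℕ) :
    ((1 + C b * X + X ^ 2 : ℂ[X]) ^ N).coeff N
      = ∑ j ∈ Finset.range (N/2 + 1),
          ((N.choose (2*j) * (2*j).choose j : ℕ) : ℂ) * b ^ (N - 2*j) := by
  have e1 : (1 + C b * X + X ^ 2 : ℂ[X]) = C b * X + (1 + X ^ 2) := by ring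
  rw [e1, add_pow, finset_sum_coeff]
  have h : ∀ a ∈ Finset.range (N+1),
      ((C b * X) ^ a * (1 + X ^ 2) ^ (N - a) * ((N.choose a : ℕ) : ℂ[X])).coeff N
        = (if Even (N - a) then
            ((N.choose a * (N-a).choose ((N-a)/2) : ℕ) : ℂ) * b ^ a else 0) := by
    intro a ha
    rw [Finset.mem_range] at ha
    have e2 : (C b * X : ℂ[X]) ^ a * (1 + X ^ 2) ^ (N - a) * ((N.choose a : ℕ) : ℂ[X])
        = C (((N.choose a : ℕ) : ℂ) * b ^ a) * (X ^ a * (1 + X ^ 2) ^ (N - a)) := by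
      rw [mul_pow, ← C_pow, ← C_eq_natCast, C_mul]; ring
    have e4 : (X ^ a * (1 + X ^ 2) ^ (N - a) : ℂ[X]).coeff N
        = ((1 + X ^ 2 : ℂ[X]) ^ (N - a)).coeff (N - a) := by
      have h5 := coeff_X_pow_mul ((1 + X ^ 2 : ℂ[X]) ^ (N - a)) a (N - a)
      rwa [show N - a + a = N from by omega] at h5
    rw [e2, coeff_C_mul, e4, coeff_one_add_X_sq_pow, mul_ite, mul_zero]
    rw [if_congr Iff.rfl rfl rfl]
    congr 1
    push_cast
    ring
  rw [Finset.sum_congr rfl h, ← Finset.sum_filter]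
  refine Finset.sum_nbij' (fun a => (N - a) / 2) (fun j => N - 2 * j) ?_ ?_ ?_ ?_ ?_
  · intro a ha
    simp only [Finset.mem_filter, Finset.mem_range] at ha ⊢
    omega
  · intro j hj
    simp only [Finset.mem_filter, Finset.mem_range] at hj ⊢
    constructor
    · omega
    · exact ⟨j, by omega⟩
  · intro a ha
    simp only [Finset.mem_filter, Finset.mem_range] at ha
    obtain ⟨_, c, hc⟩ := ha
    omega
  · intro j hj
    simp only [Finset.mem_range] at hj
    omega
  · intro a ha
    simp only [Finset.mem_filter, Finset.mem_range] at ha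
    obtain ⟨h1, c, hc⟩ := ha
    have h2 : 2 * ((N - a) / 2) = N - a := by omega
    have h3 : N - 2 * ((N - a) / 2) = a := by omega
    rw [h2, show N - (N - a) = a from by omega, Nat.choose_symm (by omega : a ≤ N)]

open Real in
noncomputable def gfun (N : ℕ) (c : ℝ) : ℝ :=
  ∑ j ∈ Finset.range (N/2 + 1), ((N.choose (2*j) * (2*j).choose j : ℕ) : ℝ) * (2*c) ^ (N - 2*j)

open Real in
lemma key_identity (N : ℕ) (hN : 2 ≤ N) (d : ℕ) :
    ∑ k ∈ Finset.range (N+1), ((N.choose k : ℕ) : ℝ)^2 * Real.cos (2*π*d*k/N)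
      = (-1)^d * gfun N (Real.cos (π*d/N)) := by
  have hN0 : (N : ℝ) ≠ 0 := by positivity
  set α : ℝ := π*d/N with hα
  set w : ℂ := Complex.exp (α * Complex.I) with hw
  set u : ℂ := Complex.exp (-α * Complex.I) with hu
  have hwu : w * u = 1 := by
    rw [hw, hu, ← Complex.exp_add, show (α:ℂ) * Complex.I + -α * Complex.I = 0 by ring,
      Complex.exp_zero]
  have hquad : (1 + C w * X) * (1 + C u * X) = 1 + C (w + u) * X + X^2 := by
    have : (1 + C w * X) * (1 + C u * X) = 1 + C (w+u) * X + C (w*u) * X^2 := by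
      rw [C_add, C_mul]; ring
    rw [this, hwu, C_1, one_mul]
  have h2 : (1 + C w * X : ℂ[X])^N * (1 + C u * X)^N = (1 + C (w+u) * X + X^2)^N := by
    rw [← mul_pow, hquad]
  have h1 : ((1 + C w * X : ℂ[X])^N * (1 + C u * X)^N).coeff N
      = ∑ k ∈ Finset.range (N+1), ((N.choose k : ℕ) : ℂ)^2 * (w^k * u^(N-k)) := by
    rw [coeff_mul, Finset.Nat.sum_antidiagonal_eq_sum_range_succ_mk]
    refine Finset.sum_congr rfl fun k hk => ?_
    rw [Finset.mem_range] at hk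
    rw [coeff_one_add_C_mul_X_pow, coeff_one_add_C_mul_X_pow,
      Nat.choose_symm (by omega : k ≤ N)]
    ring
  rw [h2, coeff_trinomial] at h1
  -- now take real parts
  have hwu2 : w + u = ((2 * Real.cos α : ℝ) : ℂ) := by
    push_cast
    rw [hw, hu]
    exact (Complex.two_cos _).symm
  have hre := congrArg Complex.re h1
  rw [Complex.re_sum, Complex.re_sum] at hre
  have hL : ∀ k ∈ Finset.range (N+1),
      (((N.choose k : ℕ) : ℂ)^2 * (w^k * u^(N-k))).re
        = ((N.choose k : ℕ) : ℝ)^2 * ((-1:ℝ)^d * Real.cos (2*π*d*k/N)) := by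
    intro k hk
    rw [Finset.mem_range] at hk
    have hk' : (↑(N - k) : ℂ) = (N : ℂ) - k := by push_cast [Nat.cast_sub (by omega : k ≤ N)]; ring
    have e1 : w^k * u^(N-k) = Complex.exp (((2*(k:ℝ) - N) * α : ℝ) * Complex.I) := by
      rw [hw, hu, ← Complex.exp_nat_mul, ← Complex.exp_nat_mul, ← Complex.exp_add]
      congr 1
      rw [hk']
      push_cast
      ring
    have e2 : (2*(k:ℝ) - N) * α = (2*π*d*k/N) - d*π := by
      rw [hα]; field_simp
    have e3 : Real.cos ((2*(k:ℝ) - N) * α) = (-1:ℝ)^d * Real.cos (2*π*d*k/N) := by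
      rw [e2, ← Real.cos_neg, neg_sub, Real.cos_nat_mul_pi_sub]
    rw [e1, show ((N.choose k : ℕ) : ℂ)^2 = ((((N.choose k : ℕ) : ℝ))^2 : ℝ) by push_cast; ring,
      Complex.re_ofReal_mul, Complex.exp_mul_I]
    simp only [Complex.add_re, Complex.cos_ofReal_re, Complex.mul_re, Complex.sin_ofReal_re,
      Complex.I_re, Complex.sin_ofReal_im, Complex.I_im, mul_zero, zero_mul, sub_zero, mul_one]
    rw [e3]
    ring_nf
  have hR : ∀ j ∈ Finset.range (N/2+1),
      (((N.choose (2*j) * (2*j).choose j : ℕ) : ℂ) * (w + u) ^ (N - 2*j)).re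
        = ((N.choose (2*j) * (2*j).choose j : ℕ) : ℝ) * (2 * Real.cos α) ^ (N - 2*j) := by
    intro j _
    rw [hwu2, ← Complex.ofReal_pow, ← Complex.ofReal_natCast, ← Complex.ofReal_mul,
      Complex.ofReal_re]
  rw [Finset.sum_congr rfl hL, Finset.sum_congr rfl hR] at hre
  simp only [gfun]
  rw [hre, Finset.mul_sum]
  refine Finset.sum_congr rfl fun k _ => ?_
  have hsq : ((-1:ℝ))^d * (-1:ℝ)^d = 1 := by
    rw [← pow_add]
    exact Even.neg_one_pow ⟨d, rfl⟩
  linear_combination (-(((N.choose k : ℕ) : ℝ)^2 * Real.cos (2*π*↑d*↑k/↑N))) * hsq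

open Real in
noncomputable def Ffun (N : ℕ) (x : ℝ) : ℝ :=
  ∑ k ∈ Finset.Icc 1 (N-1), 2 * ((N.choose k : ℕ) : ℝ)^2 * (1 - Real.cos (2*π*x*k/N))

open Real in
lemma sum_range_split (N : ℕ) (hN : 2 ≤ N) (f : ℕ → ℝ) :
    ∑ k ∈ Finset.range (N+1), f k = f 0 + (∑ k ∈ Finset.Icc 1 (N-1), f k) + f N := by
  rw [show Finset.Icc 1 (N-1) = Finset.Ico 1 N from by
    rw [← Finset.Ico_add_one_right_eq_Icc]; congr 1; omega]
  rw [Finset.range_eq_Ico, Finset.sum_eq_sum_Ico_succ_bot (by omega),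
    Finset.sum_Ico_succ_top (by omega)]
  ring

lemma vandermonde_sq (N : ℕ) :
    ∑ k ∈ Finset.range (N+1), ((N.choose k : ℕ) : ℝ)^2 = (((2*N).choose N : ℕ) : ℝ) := by
  have h := Nat.add_choose_eq N N N
  rw [Finset.Nat.sum_antidiagonal_eq_sum_range_succ_mk] at h
  rw [two_mul, h]
  push_cast
  refine Finset.sum_congr rfl fun k hk => ?_
  rw [Finset.mem_range] at hk
  rw [Nat.choose_symm (by omega : k ≤ N)]
  ring

open Real in
lemma Ffun_eq (N : ℕ) (hN : 2 ≤ N) (d : ℕ) :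
    Ffun N d = 2*(((2*N).choose N : ℕ) : ℝ)
      - 2*((-1:ℝ)^d * gfun N (Real.cos (π*d/N))) := by
  have hN0 : (N : ℝ) ≠ 0 := by positivity
  have h1 := sum_range_split N hN (fun k => ((N.choose k : ℕ):ℝ)^2)
  have h2 := sum_range_split N hN (fun k => ((N.choose k : ℕ):ℝ)^2 * Real.cos (2*π*d*k/N))
  rw [vandermonde_sq] at h1
  rw [key_identity N hN d] at h2
  simp only [Nat.choose_zero_right, Nat.choose_self, Nat.cast_zero, Nat.cast_one] at h1 h2
  rw [show Real.cos (2*π*(d:ℝ)*(0:ℝ)/N) = 1 from by norm_num] at h2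
  rw [show Real.cos (2*π*(d:ℝ)*(N:ℝ)/N) = 1 from by
    rw [show 2*π*(d:ℝ)*(N:ℝ)/(N:ℝ) = (d:ℝ)*(2*π) from by field_simp,
      Real.cos_nat_mul_two_pi]] at h2
  have h3 : Ffun N d = 2 * (∑ k ∈ Finset.Icc 1 (N-1), ((N.choose k : ℕ):ℝ)^2)
      - 2 * (∑ k ∈ Finset.Icc 1 (N-1), ((N.choose k : ℕ):ℝ)^2 * Real.cos (2*π*d*k/N)) := by
    rw [Ffun, Finset.mul_sum, Finset.mul_sum, ← Finset.sum_sub_distrib]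
    refine Finset.sum_congr rfl fun k _ => ?_
    ring
  rw [h3]
  linarith [h1, h2]

open Real in
lemma Ffun_neg (N : ℕ) (x : ℝ) : Ffun N (-x) = Ffun N x := by
  unfold Ffun
  refine Finset.sum_congr rfl fun k _ => ?_
  rw [show 2*π*(-x)*k/N = -(2*π*x*k/N) from by ring, Real.cos_neg]

open Real in
lemma Ffun_nat_sub (N : ℕ) (hN : 2 ≤ N) (e : ℕ) (he : e ≤ N) :
    Ffun N ((N:ℝ) - e) = Ffun N e := by
  have hN0 : (N : ℝ) ≠ 0 := by positivity
  unfold Ffun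
  refine Finset.sum_congr rfl fun k _ => ?_
  rw [show 2*π*((N:ℝ) - e)*k/N = (k:ℝ)*(2*π) - 2*π*e*k/N from by field_simp,
    Real.cos_nat_mul_two_pi_sub]

open Real in
lemma cos_pik_nonneg (N k : ℕ) (hN : 2 ≤ N) (hk2 : 2*k ≤ N) :
    0 ≤ Real.cos (π*k/N) := by
  apply Real.cos_nonneg_of_mem_Icc
  constructor
  · have : (0:ℝ) ≤ π*k/N := by positivity
    linarith [Real.pi_pos]
  · rw [div_le_div_iff₀ (by positivity) (by norm_num : (0:ℝ) < 2)]
    have : (2:ℝ)*k ≤ N := by exact_mod_cast hk2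
    nlinarith [Real.pi_pos]

open Real in
lemma gfun_pos (N : ℕ) (hN : 2 ≤ N) {k : ℕ} (hk1 : 1 ≤ k) (hk2 : 2*k ≤ N) :
    0 < gfun N (Real.cos (π*k/N)) := by
  have hc0 : 0 ≤ Real.cos (π*k/N) := cos_pik_nonneg N k hN hk2
  unfold gfun
  apply Finset.sum_pos'
  · intro j _
    positivity
  · rcases Nat.even_or_odd N with heN | hoN
    · obtain ⟨t, ht⟩ := heN
      refine ⟨N/2, Finset.mem_range.2 (by omega), ?_⟩
      have h2 : 2*(N/2) = N := by omega
      rw [h2, Nat.sub_self, pow_zero, mul_one, Nat.choose_self, one_mul]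
      exact_mod_cast Nat.choose_pos (show N/2 ≤ N by omega)
    · -- N odd, so 2k < N and cos > 0
      have h2k : 2*k < N := by
        rcases hoN with ⟨t, ht⟩; omega
      have hcpos : 0 < Real.cos (π*k/N) := by
        apply Real.cos_pos_of_mem_Ioo
        constructor
        · have : (0:ℝ) ≤ π*k/N := by positivity
          linarith [Real.pi_pos]
        · rw [div_lt_div_iff₀ (by positivity) (by norm_num : (0:ℝ) < 2)]
          have : (2:ℝ)*k < N := by exact_mod_cast h2k
          nlinarith [Real.pi_pos]
      refine ⟨N/2, Finset.mem_range.2 (by omega), ?_⟩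
      have he : N - 2*(N/2) = 1 := by rcases hoN with ⟨t, ht⟩; omega
      rw [he]
      have hch : 0 < N.choose (2*(N/2)) * (2*(N/2)).choose (N/2) :=
        Nat.mul_pos (Nat.choose_pos (by omega)) (Nat.choose_pos (by omega))
      have : (0:ℝ) < (N.choose (2*(N/2)) * (2*(N/2)).choose (N/2) : ℕ) := by exact_mod_cast hch
      nlinarith
    
open Real in
lemma gfun_strict_mono (N : ℕ) (hN : 2 ≤ N) {c1 c2 : ℝ} (h0 : 0 ≤ c1) (h : c1 < c2) :
    gfun N c1 < gfun N c2 := by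
  unfold gfun
  apply Finset.sum_lt_sum
  · intro j _
    apply mul_le_mul_of_nonneg_left _ (by positivity)
    apply pow_le_pow_left₀ (by linarith) (by linarith)
  · refine ⟨(N-1)/2, Finset.mem_range.2 (by omega), ?_⟩
    apply mul_lt_mul_of_pos_left
    · apply pow_lt_pow_left₀ (by linarith) (by linarith)
      omega
    · have hch : 0 < N.choose (2*((N-1)/2)) * (2*((N-1)/2)).choose ((N-1)/2) :=
        Nat.mul_pos (Nat.choose_pos (by omega)) (Nat.choose_pos (by omega))
      exact_mod_cast hch

noncomputable def Acomp (N : ℕ) (a : EuclideanSpace ℝ (Fin (N - 1))) (i : ℕ) : ℝ :=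
  if h : i < N - 1 then a ⟨i, h⟩ else 0

lemma nsq1 (x y : ℝ) :
    Complex.normSq (((x:ℂ) + Complex.I * (y:ℂ)) / ((Real.sqrt 2 : ℝ):ℂ)) = (x^2+y^2)/2 := by
  rw [map_div₀, show ((x:ℂ) + Complex.I * (y:ℂ)) = (x:ℂ) + (y:ℂ) * Complex.I from by ring,
    Complex.normSq_add_mul_I, Complex.normSq_ofReal,
    Real.mul_self_sqrt (by norm_num : (0:ℝ) ≤ 2)]

lemma nsq3 (x y : ℝ) :
    Complex.normSq (((x:ℂ) - Complex.I * (y:ℂ)) / ((Real.sqrt 2 : ℝ):ℂ)) = (x^2+y^2)/2 := by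
  rw [map_div₀, show ((x:ℂ) - Complex.I * (y:ℂ)) = (x:ℂ) + (-y:ℝ) * Complex.I from by push_cast; ring,
    Complex.normSq_add_mul_I, Complex.normSq_ofReal,
    Real.mul_self_sqrt (by norm_num : (0:ℝ) ≤ 2)]
  ring

lemma crCoeff_normSq (N : ℕ) (hN : 2 ≤ N) (a : EuclideanSpace ℝ (Fin (N - 1))) {k : ℕ}
    (h1 : 1 ≤ k) (h2 : k ≤ N - 1) :
    Complex.normSq (crCoeff N a k)
      = (Acomp N a (k-1)^2 + Acomp N a (N-k-1)^2)/2 := by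
  have hk1 : k - 1 < N - 1 := by omega
  have hk2 : N - k - 1 < N - 1 := by omega
  rw [crCoeff, dif_pos ⟨h1, h2⟩]
  simp only [Acomp, dif_pos hk1, dif_pos hk2]
  split_ifs with hlt heq
  · exact nsq1 _ _
  · rw [Complex.normSq_ofReal]
    have hidx : (⟨N-k-1, hk2⟩ : Fin (N-1)) = ⟨k-1, hk1⟩ := by
      ext; simp only; omega
    rw [hidx]
    ring
  · rw [nsq3]
    ring

lemma norm_sq_eq (N : ℕ) (hN : 2 ≤ N) (a : EuclideanSpace ℝ (Fin (N - 1))) :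
    ‖a‖^2 = ∑ k ∈ Finset.Icc 1 (N-1), Complex.normSq (crCoeff N a k) := by
  have h0 : ‖a‖^2 = ∑ i ∈ Finset.range (N-1), Acomp N a i ^ 2 := by
    rw [EuclideanSpace.norm_eq, Real.sq_sqrt (by positivity)]
    rw [← Fin.sum_univ_eq_sum_range (fun i => Acomp N a i ^ 2) (N-1)]
    refine Finset.sum_congr rfl fun i _ => ?_
    rw [Real.norm_eq_abs, sq_abs, Acomp, dif_pos i.isLt]
  have h1 : ‖a‖^2 = ∑ k ∈ Finset.Icc 1 (N-1), Acomp N a (k-1) ^ 2 := by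
    rw [h0]
    refine Finset.sum_nbij' (fun i => i+1) (fun k => k-1) ?_ ?_ ?_ ?_ ?_
    · intro i hi; simp only [Finset.mem_range] at hi; simp only [Finset.mem_Icc]; omega
    · intro k hk; simp only [Finset.mem_Icc] at hk; simp only [Finset.mem_range]; omega
    · intro i _; omega
    · intro k hk; simp only [Finset.mem_Icc] at hk; omega
    · intro i _; rw [Nat.add_sub_cancel]
  have h2 : ∑ k ∈ Finset.Icc 1 (N-1), Acomp N a (N-k-1) ^ 2
      = ∑ k ∈ Finset.Icc 1 (N-1), Acomp N a (k-1) ^ 2 := by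
    refine Finset.sum_nbij' (fun k => N-k) (fun k => N-k) ?_ ?_ ?_ ?_ ?_
    · intro k hk; simp only [Finset.mem_Icc] at hk ⊢; omega
    · intro k hk; simp only [Finset.mem_Icc] at hk ⊢; omega
    · intro k hk; simp only [Finset.mem_Icc] at hk; omega
    · intro k hk; simp only [Finset.mem_Icc] at hk; omega
    · intro k hk; rfl
  calc ‖a‖^2 = (∑ k ∈ Finset.Icc 1 (N-1), Acomp N a (k-1) ^ 2
        + ∑ k ∈ Finset.Icc 1 (N-1), Acomp N a (N-k-1) ^ 2) / 2 := by
        rw [h2, ← h1]; ring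
    _ = ∑ k ∈ Finset.Icc 1 (N-1), (Acomp N a (k-1)^2 + Acomp N a (N-k-1)^2)/2 := by
        rw [← Finset.sum_add_distrib, Finset.sum_div]
    _ = ∑ k ∈ Finset.Icc 1 (N-1), Complex.normSq (crCoeff N a k) := by
        refine Finset.sum_congr rfl fun k hk => ?_
        rw [Finset.mem_Icc] at hk
        rw [crCoeff_normSq N hN a hk.1 hk.2]

lemma crCoeff_sub (N : ℕ) (x y : EuclideanSpace ℝ (Fin (N-1))) (k : ℕ) :
    crCoeff N (x - y) k = crCoeff N x k - crCoeff N y k := by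
  by_cases h : 1 ≤ k ∧ k ≤ N - 1
  · simp only [crCoeff, dif_pos h]
    have hs : ∀ (i : ℕ) (hi : i < N - 1),
        ((x - y) (⟨i, hi⟩ : Fin (N-1)) : ℝ) = x ⟨i, hi⟩ - y ⟨i, hi⟩ := fun i hi => rfl
    split_ifs with h1 h2
    · rw [hs, hs]; push_cast; ring
    · rw [hs]; push_cast; ring
    · rw [hs, hs]; push_cast; ring
  · simp only [crCoeff, dif_neg h]; ring

open Real in
lemma crCoeff_vertex (N : ℕ) (hN : 2 ≤ N) (v : ℕ → EuclideanSpace ℝ (Fin (N - 1)))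
    (hv : ∀ n, 1 ≤ n → n ≤ N →
      crPoly N (v n) = (X + C (Complex.exp (2 * Real.pi * Complex.I / N) ^ n)) ^ N)
    (n : ℕ) (hn1 : 1 ≤ n) (hn2 : n ≤ N) {k : ℕ} (hk1 : 1 ≤ k) (hk2 : k ≤ N - 1) :
    crCoeff N (v n) k
      = (N.choose k : ℂ) * Complex.exp (2 * Real.pi * Complex.I / N) ^ (n*k) := by
  have h := congrArg (fun p => Polynomial.coeff p (N - k)) (hv n hn1 hn2)
  simp only [crPoly] at h
  rw [coeff_add, coeff_add, coeff_X_pow, if_neg (by omega : ¬ (N - k = N)),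
    Polynomial.coeff_one, if_neg (by omega : ¬ (N - k = 0)), finset_sum_coeff] at h
  rw [Finset.sum_eq_single k (fun j hj hne => by
      rw [Finset.mem_Icc] at hj
      rw [coeff_C_mul, coeff_X_pow, if_neg (by omega : ¬ (N - k = N - j)), mul_zero])
    (fun hnot => absurd (Finset.mem_Icc.2 ⟨hk1, hk2⟩) hnot)] at h
  rw [coeff_C_mul, coeff_X_pow, if_pos rfl, mul_one] at h
  rw [coeff_X_add_C_pow, show N - (N - k) = k from by omega,
    Nat.choose_symm (by omega : k ≤ N), ← pow_mul, mul_comm n k] at h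
  rw [zero_add, zero_add] at h
  rw [h, mul_comm, mul_comm k n]

open Real in
lemma normSq_exp_sub_exp (a b : ℝ) :
    Complex.normSq (Complex.exp ((a:ℂ)*Complex.I) - Complex.exp ((b:ℂ)*Complex.I))
      = 2 - 2*Real.cos (a-b) := by
  rw [Complex.exp_mul_I, Complex.exp_mul_I, ← Complex.ofReal_cos, ← Complex.ofReal_sin,
    ← Complex.ofReal_cos, ← Complex.ofReal_sin,
    show ((Real.cos a : ℂ) + (Real.sin a : ℂ)*Complex.I)
        - ((Real.cos b : ℂ) + (Real.sin b : ℂ)*Complex.I)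
      = ((Real.cos a - Real.cos b : ℝ) : ℂ) + ((Real.sin a - Real.sin b : ℝ) : ℂ)*Complex.I
      from by push_cast; ring,
    Complex.normSq_add_mul_I, Real.cos_sub]
  nlinarith [Real.sin_sq_add_cos_sq a, Real.sin_sq_add_cos_sq b]

open Real in
lemma exp_pow_eq (N : ℕ) (hN : 2 ≤ N) (n k : ℕ) :
    Complex.exp (2 * Real.pi * Complex.I / N) ^ (n*k)
      = Complex.exp (((2*π*n*k/N : ℝ):ℂ) * Complex.I) := by
  have hN0 : (N:ℂ) ≠ 0 := by exact_mod_cast (by positivity : (0:ℝ) < (N:ℝ)).ne'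
  rw [← Complex.exp_nat_mul]
  congr 1
  push_cast
  field_simp

open Real in
lemma dist_sq_eq_Ffun (N : ℕ) (hN : 2 ≤ N) (v : ℕ → EuclideanSpace ℝ (Fin (N - 1)))
    (hv : ∀ n, 1 ≤ n → n ≤ N →
      crPoly N (v n) = (X + C (Complex.exp (2 * Real.pi * Complex.I / N) ^ n)) ^ N)
    (m m' : ℕ) (hm1 : 1 ≤ m) (hm2 : m ≤ N) (hm'1 : 1 ≤ m') (hm'2 : m' ≤ N) :
    ‖v m - v m'‖^2 = Ffun N ((m:ℝ) - (m':ℝ)) := by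
  rw [norm_sq_eq N hN, Ffun]
  refine Finset.sum_congr rfl fun k hk => ?_
  rw [Finset.mem_Icc] at hk
  rw [crCoeff_sub, crCoeff_vertex N hN v hv m hm1 hm2 hk.1 hk.2,
    crCoeff_vertex N hN v hv m' hm'1 hm'2 hk.1 hk.2,
    ← mul_sub, map_mul, Complex.normSq_natCast,
    exp_pow_eq N hN m k, exp_pow_eq N hN m' k, normSq_exp_sub_exp,
    show (2*π*(m:ℝ)*k/N) - (2*π*(m':ℝ)*k/N) = 2*π*((m:ℝ)-(m':ℝ))*k/N from by ring]
  ring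

open Real in
lemma pik_le (N k : ℕ) (hN : 2 ≤ N) (h2k : 2*k ≤ N) : π*k/N ≤ π/2 := by
  rw [div_le_div_iff₀ (by positivity) (by norm_num : (0:ℝ) < 2)]
  have : (2:ℝ)*k ≤ N := by exact_mod_cast h2k
  nlinarith [Real.pi_pos]

/-- Distances between the vertices of `W_N`: `‖v_m - v_{m'}‖² = ‖v_N - v_{|m'-m|}‖²`; moreover,
among indices `j < k ≤ N/2`, the squared distances `‖v_N - v_k‖²` are increasing in `k` and
below `2 binom(2N,N)` for even indices, and decreasing in `k` and above `2 binom(2N,N)` for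
odd indices. -/
theorem WSet_vertex_distances (N : ℕ) (hN : 2 ≤ N)
    (v : ℕ → EuclideanSpace ℝ (Fin (N - 1)))
    (hv : ∀ n, 1 ≤ n → n ≤ N →
      crPoly N (v n) = (X + C (Complex.exp (2 * Real.pi * Complex.I / N) ^ n)) ^ N) :
    (∀ m m', 1 ≤ m → m ≤ N → 1 ≤ m' → m' ≤ N → m ≠ m' →
      ‖v m - v m'‖ ^ 2 = ‖v N - v (max m m' - min m m')‖ ^ 2) ∧
    (∀ j k, 1 ≤ j → j < k → 2 * k ≤ N → Even j → Even k →
      ‖v N - v j‖ ^ 2 < ‖v N - v k‖ ^ 2 ∧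
        ‖v N - v k‖ ^ 2 < 2 * ((2 * N).choose N : ℝ)) ∧
    (∀ j k, 1 ≤ j → j < k → 2 * k ≤ N → Odd j → Odd k →
      ‖v N - v j‖ ^ 2 > ‖v N - v k‖ ^ 2 ∧
        ‖v N - v k‖ ^ 2 > 2 * ((2 * N).choose N : ℝ)) := by
  have key : ∀ d : ℕ, 1 ≤ d → d ≤ N → ‖v N - v d‖^2 = Ffun N d := by
    intro d h1 h2
    rw [dist_sq_eq_Ffun N hN v hv N d (by omega) le_rfl h1 h2, Ffun_nat_sub N hN d h2]
  have hcmp : ∀ j k : ℕ, 1 ≤ j → j < k → 2*k ≤ N →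
      gfun N (Real.cos (Real.pi*k/N)) < gfun N (Real.cos (Real.pi*j/N))
      ∧ 0 < gfun N (Real.cos (Real.pi*k/N)) := by
    intro j k hj hjk hkN
    have hk1 : 1 ≤ k := by omega
    constructor
    · apply gfun_strict_mono N hN (cos_pik_nonneg N k hN hkN)
      apply Real.cos_lt_cos_of_nonneg_of_le_pi
      · positivity
      · linarith [pik_le N k hN hkN, Real.pi_pos]
      · rw [div_lt_div_iff₀ (by positivity) (by positivity)]
        have h1 : (j:ℝ) < k := by exact_mod_cast hjk
        have hN0 : (0:ℝ) < N := by positivity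
        nlinarith [mul_pos Real.pi_pos hN0]
    · exact gfun_pos N hN hk1 hkN
  refine ⟨?_, ?_, ?_⟩
  · intro m m' hm1 hm2 hm'1 hm'2 hne
    set e := max m m' - min m m' with he
    have he1 : 1 ≤ e := by omega
    have he2 : e ≤ N := by omega
    rw [dist_sq_eq_Ffun N hN v hv m m' hm1 hm2 hm'1 hm'2, key e he1 he2]
    rcases le_total m' m with hle | hle
    · have hcast : ((m:ℝ) - m') = ((e:ℕ):ℝ) := by
        rw [show e = m - m' from by omega, Nat.cast_sub hle]
      rw [hcast]
    · have hcast : ((m:ℝ) - m') = -(((e:ℕ)):ℝ) := by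
        rw [show e = m' - m from by omega, Nat.cast_sub hle]; ring
      rw [hcast, Ffun_neg]
  · intro j k hj hjk hkN hej hek
    obtain ⟨hmono, hpos⟩ := hcmp j k hj hjk hkN
    rw [key j hj (by omega), key k (by omega) (by omega), Ffun_eq N hN j, Ffun_eq N hN k,
      Even.neg_one_pow hej, Even.neg_one_pow hek, one_mul, one_mul]
    constructor
    · linarith
    · push_cast
      linarith
  · intro j k hj hjk hkN hoj hok
    obtain ⟨hmono, hpos⟩ := hcmp j k hj hjk hkN
    rw [key j hj (by omega), key k (by omega) (by omega), Ffun_eq N hN j, Ffun_eq N hN k,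
      Odd.neg_one_pow hoj, Odd.neg_one_pow hok]
    constructor
    · linarith
    · push_cast
      linarith

end CRAuxLemmas
end

section
/- Let N ≥ 1 be an integer and define f : ℝ → ℝ by f(θ) = (2 + 2cos θ)^{N/2}. Then the convolution g(t) = (1/π) ∫_{−π}^{π} f(θ) f(t − θ) dθ satisfies g(−t) = g(t) for all t, g is strictly decreasing on (0, π), and g is strictly increasing on (−π, 0). -/
/-!
Write `f = φ ∘ cos` with `φ x = (2 + 2x)^{N/2}` strictly increasing on `[-1, 1]`. Evenness of `g`
comes from the substitution `θ ↦ -θ`. For `0 < c - δ < c + δ < π`, shifting the variable by `c`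
(using `2π`-periodicity) and folding `[-π, π]` onto `[0, π]` gives
`π (g(c - δ) - g(c + δ)) = ∫₀^π (f(c - θ) - f(c + θ)) (f(θ - δ) - f(θ + δ)) dθ`,
and both factors are positive because `cos (a + b) < cos (a - b)` for `a, b ∈ (0, π)`.
-/

open Real intervalIntegral Set

theorem cos_add_lt_cos_sub {a b : ℝ} (ha : a ∈ Ioo 0 π) (hb : b ∈ Ioo 0 π) :
    cos (a + b) < cos (a - b) := by
  have := mul_pos (sin_pos_of_pos_of_lt_pi ha.1 ha.2) (sin_pos_of_pos_of_lt_pi hb.1 hb.2)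
  rw [cos_add, cos_sub]
  linarith

theorem integral_neg_self_eq_integral_add_comp_neg {G : ℝ → ℝ} {a : ℝ} (hG : Continuous G) :
    ∫ x in (-a)..a, G x = ∫ x in 0..a, (G x + G (-x)) := by
  have hreflect : ∫ x in 0..a, G (-x) = ∫ x in (-a)..0, G x := by
    simp [integral_comp_neg]
  rw [integral_add (g := fun x ↦ G (-x)) (hG.intervalIntegrable _ _)
      ((hG.comp continuous_neg).intervalIntegrable _ _), hreflect, add_comm,
    integral_add_adjacent_intervals (hG.intervalIntegrable _ _) (hG.intervalIntegrable _ _)]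

theorem Function.Periodic.intervalIntegral_comp_add_right {K : ℝ → ℝ} {T : ℝ}
    (hK : Function.Periodic K T) (a c : ℝ) :
    ∫ x in a..a + T, K (x + c) = ∫ x in a..a + T, K x := by
  rw [integral_comp_add_right, add_right_comm, hK.intervalIntegral_add_eq]

noncomputable def cosConvolution (φ : ℝ → ℝ) (t : ℝ) : ℝ :=
  ∫ θ in (-π)..π, φ (cos θ) * φ (cos (t - θ))

namespace cosConvolution

theorem neg (φ : ℝ → ℝ) (t : ℝ) : cosConvolution φ (-t) = cosConvolution φ t := by
  have hreflect := integral_comp_neg (a := -π) (b := π) fun θ ↦ φ (cos θ) * φ (cos (t - θ))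
  simp only [neg_neg] at hreflect
  rw [cosConvolution, cosConvolution, ← hreflect]
  congr 1 with θ
  rw [cos_neg, ← cos_neg (t - -θ)]
  ring_nf

variable {φ : ℝ → ℝ}

theorem sub_eq_integral (hφ : Continuous φ) (c δ : ℝ) :
    cosConvolution φ (c - δ) - cosConvolution φ (c + δ) =
      ∫ θ in 0..π, (φ (cos (c - θ)) - φ (cos (c + θ))) * (φ (cos (θ - δ)) - φ (cos (θ + δ))) := by
  set K : ℝ → ℝ := fun θ ↦ φ (cos θ) * (φ (cos (c - δ - θ)) - φ (cos (c + δ - θ)))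
  have hK : Function.Periodic K (2 * π) := fun θ ↦ by
    simp only [K, cos_add_two_pi, ← sub_sub, cos_sub_two_pi]
  have hdiff : cosConvolution φ (c - δ) - cosConvolution φ (c + δ) = ∫ θ in (-π)..π, K θ := by
    rw [cosConvolution, cosConvolution,
      ← integral_sub (Continuous.intervalIntegrable (by fun_prop) _ _)
        (Continuous.intervalIntegrable (by fun_prop) _ _)]
    simp only [K, mul_sub]
  have hshift : ∫ θ in (-π)..π, K θ =
      ∫ θ in (-π)..π, φ (cos (θ + c)) * (φ (cos (θ + δ)) - φ (cos (θ - δ))) := by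
    have hperiod := hK.intervalIntegral_comp_add_right (-π) c
    rw [show -π + 2 * π = π by ring] at hperiod
    rw [← hperiod]
    congr 1 with θ
    simp only [K]
    rw [← cos_neg (c - δ - (θ + c)), ← cos_neg (c + δ - (θ + c))]
    ring_nf
  rw [hdiff, hshift, integral_neg_self_eq_integral_add_comp_neg (by fun_prop)]
  congr 1 with θ
  rw [← cos_neg (-θ + δ), ← cos_neg (-θ - δ)]
  ring_nf

theorem strictAntiOn (hφ : Continuous φ) (hmono : StrictMonoOn φ (Icc (-1) 1)) :
    StrictAntiOn (cosConvolution φ) (Ioo 0 π) := by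
  have hcos : ∀ {a b}, a ∈ Ioo 0 π → b ∈ Ioo 0 π → φ (cos (a + b)) < φ (cos (a - b)) :=
    fun ha hb ↦ hmono ⟨neg_one_le_cos _, cos_le_one _⟩ ⟨neg_one_le_cos _, cos_le_one _⟩
      (cos_add_lt_cos_sub ha hb)
  intro t₁ ht₁ t₂ ht₂ h12
  obtain ⟨c, δ, rfl, rfl⟩ : ∃ c δ, t₁ = c - δ ∧ t₂ = c + δ :=
    ⟨(t₁ + t₂) / 2, (t₂ - t₁) / 2, by ring, by ring⟩
  have hc : c ∈ Ioo 0 π := ⟨by linarith [ht₁.1, ht₂.1], by linarith [ht₁.2, ht₂.2]⟩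
  have hδ : δ ∈ Ioo 0 π := ⟨by linarith, by linarith [ht₁.1, ht₂.2]⟩
  rw [← sub_pos, sub_eq_integral hφ]
  refine intervalIntegral_pos_of_pos_on (Continuous.intervalIntegrable (by fun_prop) _ _)
    (fun θ hθ ↦ ?_) pi_pos
  exact mul_pos (sub_pos.2 (hcos hc hθ)) (sub_pos.2 (hcos hθ hδ))

theorem strictMonoOn (hφ : Continuous φ) (hmono : StrictMonoOn φ (Icc (-1) 1)) :
    StrictMonoOn (cosConvolution φ) (Ioo (-π) 0) := by
  intro t₁ ht₁ t₂ ht₂ h12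
  rw [← neg φ t₁, ← neg φ t₂]
  exact strictAntiOn hφ hmono ⟨by linarith [ht₂.2], by linarith [ht₂.1]⟩
    ⟨by linarith [ht₁.2], by linarith [ht₁.1]⟩ (neg_lt_neg h12)

end cosConvolution

/-- Let `f(θ) = (2 + 2 cos θ)^{N/2}` (which equals `|(e^{iθ} + 1)^N|`). Then the convolution
`g(t) = (1/π) ∫_{-π}^{π} f(θ) f(t - θ) dθ` is even, strictly decreasing on `(0, π)`, and
strictly increasing on `(-π, 0)`. -/
theorem convolution_monotone (N : ℕ) (hN : 1 ≤ N)
    (f : ℝ → ℝ) (hf : ∀ θ : ℝ, f θ = (2 + 2 * Real.cos θ) ^ ((N : ℝ) / 2))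
    (g : ℝ → ℝ)
    (hg : ∀ t : ℝ, g t = (1 / Real.pi) * ∫ θ in (-Real.pi)..Real.pi, f θ * f (t - θ)) :
    (∀ t : ℝ, g (-t) = g t) ∧
      StrictAntiOn g (Set.Ioo 0 Real.pi) ∧
      StrictMonoOn g (Set.Ioo (-Real.pi) 0) := by
  set φ : ℝ → ℝ := fun x ↦ (2 + 2 * x) ^ ((N : ℝ) / 2)
  have he : 0 < (N : ℝ) / 2 := by
    have : (1 : ℝ) ≤ N := mod_cast hN
    linarith
  have hφ : Continuous φ :=
    (continuous_const.add (continuous_const.mul continuous_id)).rpow_const fun _ ↦ Or.inr he.le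
  have hmono : StrictMonoOn φ (Icc (-1) 1) := fun x hx y _ hxy ↦
    rpow_lt_rpow (by linarith [hx.1]) (by linarith) he
  have hg' : g = fun t ↦ π⁻¹ * cosConvolution φ t := by
    ext t
    simp only [hg, hf, one_div, cosConvolution, φ]
  subst hg'
  refine ⟨fun t ↦ congrArg (π⁻¹ * ·) (cosConvolution.neg φ t), fun a ha b hb hab ↦ ?_, fun a ha b hb hab ↦ ?_⟩
  · exact mul_lt_mul_of_pos_left (cosConvolution.strictAntiOn hφ hmono ha hb hab) (by positivity)
  · exact mul_lt_mul_of_pos_left (cosConvolution.strictMonoOn hφ hmono ha hb hab) (by positivity)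
end

section
/- Define E : ℝ^{N−1} → ℝ^{N−1} by E(θ_1, …, θ_{N−1}) = a, where a is the unique element of ℝ^{N−1} whose associated conjugate reciprocal polynomial is ∏_{n=1}^N (x − ξ_n) with ξ_n = e^{iθ_n} for 1 ≤ n ≤ N−1 and ξ_N = (−1)^N/(ξ_1 ξ_2 ⋯ ξ_{N−1}). Then E is differentiable and, at every point (θ_1, …, θ_{N−1}), the absolute value of the Jacobian determinant of E equals ∏_{1 ≤ m < n ≤ N} |ξ_n − ξ_m|. -/
open Polynomial

namespace CRproof

open Matrix

variable {α : Type*} [DecidableEq α]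

lemma sum_powersetCard_compl (s : Finset α) {k : ℕ} (hk : k ≤ s.card) (f : α → ℂ) :
    ∑ t ∈ s.powersetCard k, ∏ i ∈ s \ t, f i
      = ∑ t ∈ s.powersetCard (s.card - k), ∏ i ∈ t, f i := by
  refine Finset.sum_nbij' (fun t => s \ t) (fun t => s \ t) ?_ ?_ ?_ ?_ ?_
  · intro t ht
    rw [Finset.mem_powersetCard] at ht ⊢
    exact ⟨Finset.sdiff_subset, by rw [Finset.card_sdiff_of_subset ht.1, ht.2]⟩
  · intro t ht
    rw [Finset.mem_powersetCard] at ht ⊢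
    refine ⟨Finset.sdiff_subset, ?_⟩
    rw [Finset.card_sdiff_of_subset ht.1, ht.2]
    omega
  · intro t ht
    rw [Finset.mem_powersetCard] at ht
    exact Finset.sdiff_sdiff_eq_self ht.1
  · intro t ht
    rw [Finset.mem_powersetCard] at ht
    exact Finset.sdiff_sdiff_eq_self ht.1
  · intro t _
    rfl

lemma sum_powersetCard_mem (s : Finset α) {a : α} (ha : a ∈ s) (k : ℕ) (f : α → ℂ) :
    ∑ t ∈ s.powersetCard (k+1), (if a ∈ t then ∏ i ∈ t.erase a, f i else 0)
      = ∑ t ∈ (s.erase a).powersetCard k, ∏ i ∈ t, f i := by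
  rw [← Finset.sum_filter]
  refine Finset.sum_nbij' (fun t => t.erase a) (fun t => insert a t) ?_ ?_ ?_ ?_ ?_
  · intro t ht
    simp only [Finset.mem_filter, Finset.mem_powersetCard] at ht
    rw [Finset.mem_powersetCard]
    refine ⟨Finset.erase_subset_erase a ht.1.1, ?_⟩
    rw [Finset.card_erase_of_mem ht.2, ht.1.2]
    omega
  · intro t ht
    rw [Finset.mem_powersetCard] at ht
    have hat : a ∉ t := fun hat => (Finset.notMem_erase a s) (ht.1 hat)
    simp only [Finset.mem_filter, Finset.mem_powersetCard]
    refine ⟨⟨?_, by rw [Finset.card_insert_of_notMem hat, ht.2]⟩, Finset.mem_insert_self a t⟩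
    intro x hx
    rcases Finset.mem_insert.1 hx with rfl | hx
    · exact ha
    · exact (Finset.erase_subset a s) (ht.1 hx)
  · intro t ht
    simp only [Finset.mem_filter] at ht
    exact Finset.insert_erase ht.2
  · intro t ht
    rw [Finset.mem_powersetCard] at ht
    exact Finset.erase_insert (fun hat => (Finset.notMem_erase a s) (ht.1 hat))
  · intro t _
    rfl

/-! ### elementary symmetric functions of `ξ` -/

variable {m : ℕ}

noncomputable def esF (m : ℕ) (ξ : Fin (m+1) → ℂ) (k : ℕ) : ℂ :=
  ∑ t ∈ (Finset.univ : Finset (Fin (m+1))).powersetCard k, ∏ i ∈ t, ξ i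

noncomputable def esE (m : ℕ) (ξ : Fin (m+1) → ℂ) (k : ℕ) (n : Fin (m+1)) : ℂ :=
  ∑ t ∈ ((Finset.univ : Finset (Fin (m+1))).erase n).powersetCard k, ∏ i ∈ t, ξ i

@[simp] lemma esF_zero (ξ : Fin (m+1) → ℂ) : esF m ξ 0 = 1 := by simp [esF]

@[simp] lemma esE_zero (ξ : Fin (m+1) → ℂ) (n : Fin (m+1)) : esE m ξ 0 n = 1 := by simp [esE]

lemma esF_succ (ξ : Fin (m+1) → ℂ) (k : ℕ) (n : Fin (m+1)) :
    esF m ξ (k+1) = esE m ξ (k+1) n + ξ n * esE m ξ k n := by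
  have hns : n ∉ (Finset.univ : Finset (Fin (m+1))).erase n := Finset.notMem_erase n _
  have h1 : (Finset.univ : Finset (Fin (m+1))) = insert n (Finset.univ.erase n) :=
    (Finset.insert_erase (Finset.mem_univ n)).symm
  have hdisj : Disjoint ((Finset.univ.erase n).powersetCard (k+1))
      (((Finset.univ.erase n).powersetCard k).image (insert n)) := by
    rw [Finset.disjoint_left]
    intro t ht ht'
    rw [Finset.mem_powersetCard] at ht
    rcases Finset.mem_image.1 ht' with ⟨u, _, rfl⟩
    exact hns (ht.1 (Finset.mem_insert_self n u))
  rw [esF]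
  conv_lhs => rw [h1]
  rw [Finset.powersetCard_succ_insert hns, Finset.sum_union hdisj, esE, esE]
  congr 1
  have hinj : ∀ x ∈ (Finset.univ.erase n).powersetCard k,
      ∀ y ∈ (Finset.univ.erase n).powersetCard k, insert n x = insert n y → x = y := by
    intro x hx y hy hxy
    rw [Finset.mem_powersetCard] at hx hy
    have hx' : n ∉ x := fun h => hns (hx.1 h)
    have hy' : n ∉ y := fun h => hns (hy.1 h)
    rw [← Finset.erase_insert hx', ← Finset.erase_insert hy', hxy]
  have himg : ∑ t ∈ ((Finset.univ.erase n).powersetCard k).image (insert n), ∏ i ∈ t, ξ i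
      = ∑ t ∈ (Finset.univ.erase n).powersetCard k, ∏ i ∈ insert n t, ξ i :=
    Finset.sum_image hinj
  rw [himg, Finset.mul_sum]
  refine Finset.sum_congr rfl fun t ht => ?_
  rw [Finset.mem_powersetCard] at ht
  rw [Finset.prod_insert (fun hnt => hns (ht.1 hnt))]

lemma esE_eq_sum (ξ : Fin (m+1) → ℂ) (k : ℕ) (n : Fin (m+1)) :
    esE m ξ k n = ∑ j ∈ Finset.range (k+1), (-1)^j * esF m ξ (k-j) * ξ n ^ j := by
  induction k with
  | zero => simp
  | succ k ih =>
    have h := esF_succ ξ k n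
    have h2 : esE m ξ (k+1) n = esF m ξ (k+1) - ξ n * esE m ξ k n := by
      rw [h]; ring
    rw [h2, ih]
    conv_rhs => rw [Finset.sum_range_succ']
    have hterm : ∀ j ∈ Finset.range (k+1), (-1:ℂ)^(j+1) * esF m ξ (k + 1 - (j+1)) * ξ n ^ (j+1)
        = -(ξ n * ((-1)^j * esF m ξ (k-j) * ξ n ^ j)) := by
      intro j _
      have h3 : k + 1 - (j+1) = k - j := by omega
      rw [h3, pow_succ, pow_succ]
      ring
    rw [Finset.sum_congr rfl hterm]
    simp only [Finset.sum_neg_distrib, ← Finset.mul_sum, pow_zero, Nat.sub_zero, one_mul, mul_one]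
    ring

lemma esE_top (ξ : Fin (m+1) → ℂ) (n : Fin (m+1)) :
    esE m ξ m n = ∏ i ∈ Finset.univ.erase n, ξ i := by
  have hc : ((Finset.univ : Finset (Fin (m+1))).erase n).card = m := by
    rw [Finset.card_erase_of_mem (Finset.mem_univ n), Finset.card_univ, Fintype.card_fin]
    omega
  have hp := Finset.powersetCard_self ((Finset.univ : Finset (Fin (m+1))).erase n)
  rw [hc] at hp
  rw [esE, hp, Finset.sum_singleton]


/-! ### the matrices -/

noncomputable def Umat (m : ℕ) (ξ : Fin (m+1) → ℂ) : Matrix (Fin (m+1)) (Fin (m+1)) ℂ :=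
  Matrix.of fun k j => if (j:ℕ) ≤ (k:ℕ) then (-1)^((k:ℕ)-(j:ℕ)) * esF m ξ ((k:ℕ)-(j:ℕ)) else 0

noncomputable def Amat (m : ℕ) (ξ : Fin (m+1) → ℂ) : Matrix (Fin (m+1)) (Fin (m+1)) ℂ :=
  Matrix.of fun k n => (-1)^(k:ℕ) * esE m ξ (k:ℕ) n

noncomputable def Smat (m : ℕ) (ξ : Fin (m+1) → ℂ) : Matrix (Fin (m+1)) (Fin (m+1)) ℂ :=
  Matrix.of fun n j =>
    if (j:ℕ) < m then
      (if n = j then -(Complex.I * ξ j) else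
        if n = Fin.last m then Complex.I * ξ (Fin.last m) else 0)
    else (if n = j then 1 else 0)

noncomputable def Mmat (m : ℕ) (ξ : Fin (m+1) → ℂ) : Matrix (Fin m) (Fin m) ℂ :=
  Matrix.of fun k j => (-1)^((k:ℕ)+1) *
    (Complex.I * ξ j.castSucc * esE m ξ (k:ℕ) j.castSucc
      - Complex.I * ξ (Fin.last m) * esE m ξ (k:ℕ) (Fin.last m))

variable {m : ℕ} (ξ : Fin (m+1) → ℂ)

lemma neg_one_pow_sub_aux {k j : ℕ} (h : j ≤ k) : (-1:ℂ)^k * (-1)^j = (-1)^(k-j) := by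
  have : k = (k - j) + j := by omega
  rw [this, pow_add, mul_assoc, ← pow_add]
  have : j + j = 2 * j := by omega
  rw [this, pow_mul]
  norm_num

lemma Amat_eq : Amat m ξ = Umat m ξ * (Matrix.vandermonde ξ)ᵀ := by
  ext k n
  rw [Matrix.mul_apply]
  simp only [Amat, Umat, Matrix.of_apply, Matrix.transpose_apply, Matrix.vandermonde_apply,
    ite_mul, zero_mul]
  rw [Fin.sum_univ_eq_sum_range
    (fun j => if j ≤ (k:ℕ) then (-1:ℂ)^((k:ℕ)-j) * esF m ξ ((k:ℕ)-j) * ξ n ^ j else 0)]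
  have hsub : Finset.range ((k:ℕ)+1) ⊆ Finset.range (m+1) := by
    apply Finset.range_subset_range.2
    have := k.isLt
    omega
  rw [← Finset.sum_subset hsub (fun x _ hx => by
    rw [if_neg]
    rw [Finset.mem_range] at hx
    omega)]
  rw [esE_eq_sum, Finset.mul_sum]
  refine Finset.sum_congr rfl fun j hj => ?_
  rw [Finset.mem_range] at hj
  rw [if_pos (by omega), ← mul_assoc, ← mul_assoc, neg_one_pow_sub_aux (by omega : j ≤ (k:ℕ))]

lemma Umat_det : (Umat m ξ).det = 1 := by
  have ht : (Umat m ξ).BlockTriangular OrderDual.toDual := by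
    intro i j h
    simp only [OrderDual.toDual_lt_toDual] at h
    simp only [Umat, Matrix.of_apply]
    rw [if_neg]
    rw [Fin.lt_iff_val_lt_val] at h
    omega
  rw [Matrix.det_of_lowerTriangular _ ht]
  rw [Finset.prod_congr rfl (fun i _ => ?_), Finset.prod_const_one]
  simp only [Umat, Matrix.of_apply, le_refl, if_pos, Nat.sub_self, pow_zero, one_mul, esF_zero]

lemma Smat_det : (Smat m ξ).det
    = ∏ n : Fin (m+1), (if (n:ℕ) < m then -(Complex.I * ξ n) else 1) := by
  have ht : (Smat m ξ).BlockTriangular OrderDual.toDual := by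
    intro i j h
    simp only [OrderDual.toDual_lt_toDual] at h
    simp only [Smat, Matrix.of_apply]
    by_cases hj : (j:ℕ) < m
    · rw [if_pos hj, if_neg (Fin.ne_of_lt h), if_neg]
      intro he
      rw [he] at h
      have := Fin.lt_iff_val_lt_val.1 h
      simp only [Fin.val_last] at this
      have := j.isLt
      omega
    · rw [if_neg hj, if_neg (Fin.ne_of_lt h)]
  rw [Matrix.det_of_lowerTriangular _ ht]
  refine Finset.prod_congr rfl fun n _ => ?_
  by_cases h : (n:ℕ) < m
  · simp only [Smat, Matrix.of_apply, if_pos h, if_pos rfl, if_true]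
  · simp only [Smat, Matrix.of_apply, if_neg h, if_pos rfl, if_true]

lemma Qcol (j : Fin m) (k : Fin (m+1)) :
    (Amat m ξ * Smat m ξ) k j.castSucc
      = -(Complex.I * ξ j.castSucc) * Amat m ξ k j.castSucc
        + Complex.I * ξ (Fin.last m) * Amat m ξ k (Fin.last m) := by
  rw [Matrix.mul_apply]
  have hj : ((j.castSucc : Fin (m+1)) : ℕ) < m := j.isLt
  have hkey : ∀ n : Fin (m+1), Amat m ξ k n * Smat m ξ n j.castSucc
      = (if n = j.castSucc then Amat m ξ k n * (-(Complex.I * ξ j.castSucc)) else 0)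
        + (if n = Fin.last m then Amat m ξ k n * (Complex.I * ξ (Fin.last m)) else 0) := by
    intro n
    have hn : Smat m ξ n j.castSucc = (if n = j.castSucc then -(Complex.I * ξ j.castSucc) else
        if n = Fin.last m then Complex.I * ξ (Fin.last m) else 0) := by
      simp only [Smat, Matrix.of_apply, if_pos hj]
    rw [hn]
    by_cases h1 : n = j.castSucc
    · subst h1
      rw [if_pos rfl, if_pos rfl, if_neg (Fin.ne_of_lt (Fin.castSucc_lt_last j)), add_zero]
    · rw [if_neg h1, if_neg h1]
      by_cases h2 : n = Fin.last m
      · subst h2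
        rw [if_pos rfl, if_pos rfl, zero_add]
      · rw [if_neg h2, if_neg h2, mul_zero, add_zero]
  rw [Finset.sum_congr rfl (fun n _ => hkey n), Finset.sum_add_distrib,
    Finset.sum_ite_eq' Finset.univ j.castSucc, Finset.sum_ite_eq' Finset.univ (Fin.last m),
    if_pos (Finset.mem_univ _), if_pos (Finset.mem_univ _)]
  ring

lemma Qlast (k : Fin (m+1)) :
    (Amat m ξ * Smat m ξ) k (Fin.last m) = Amat m ξ k (Fin.last m) := by
  rw [Matrix.mul_apply]
  have hkey : ∀ n : Fin (m+1), Amat m ξ k n * Smat m ξ n (Fin.last m)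
      = (if n = Fin.last m then Amat m ξ k n else 0) := by
    intro n
    have hn : Smat m ξ n (Fin.last m) = (if n = Fin.last m then 1 else 0) := by
      simp only [Smat, Matrix.of_apply, Fin.val_last, if_neg (lt_irrefl m)]
    rw [hn]
    by_cases h : n = Fin.last m
    · rw [if_pos h, if_pos h, mul_one]
    · rw [if_neg h, if_neg h, mul_zero]
  rw [Finset.sum_congr rfl (fun n _ => hkey n), Finset.sum_ite_eq' Finset.univ (Fin.last m),
    if_pos (Finset.mem_univ _)]

lemma Mmat_entry (k j : Fin m) :
    Mmat m ξ k j = (Amat m ξ * Smat m ξ) k.castSucc j.castSucc := by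
  rw [Qcol]
  simp only [Mmat, Amat, Matrix.of_apply, Fin.coe_castSucc, pow_succ]
  ring

lemma Qlastrow (hprod : ∏ n, ξ n = (-1)^(m+1)) (j : Fin m) :
    (Amat m ξ * Smat m ξ) (Fin.last m) j.castSucc = 0 := by
  rw [Qcol]
  simp only [Amat, Matrix.of_apply, Fin.val_last, esE_top]
  have hc : ξ j.castSucc * ∏ i ∈ Finset.univ.erase j.castSucc, ξ i = (-1)^(m+1) := by
    rw [Finset.mul_prod_erase Finset.univ ξ (Finset.mem_univ _), hprod]
  have hl : ξ (Fin.last m) * ∏ i ∈ Finset.univ.erase (Fin.last m), ξ i = (-1)^(m+1) := by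
    rw [Finset.mul_prod_erase Finset.univ ξ (Finset.mem_univ _), hprod]
  linear_combination (-(Complex.I) * (-1:ℂ)^m) * hc + (Complex.I * (-1:ℂ)^m) * hl

lemma abs_det_Mmat (h1 : ∀ n, ‖ξ n‖ = 1) (hprod : ∏ n, ξ n = (-1)^(m+1)) :
    ‖(Mmat m ξ).det‖
      = ∏ i : Fin (m+1), ∏ j ∈ Finset.Ioi i, ‖ξ j - ξ i‖ := by
  have hdetQ : (Amat m ξ * Smat m ξ).det
      = (Amat m ξ * Smat m ξ) (Fin.last m) (Fin.last m) * (Mmat m ξ).det := by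
    rw [Matrix.det_succ_row (Amat m ξ * Smat m ξ) (Fin.last m), Finset.sum_eq_single (Fin.last m)]
    · have hsub : (Amat m ξ * Smat m ξ).submatrix
          (Fin.last m).succAbove (Fin.last m).succAbove = Mmat m ξ := by
        ext k j
        rw [Matrix.submatrix_apply, Fin.succAbove_last, ← Mmat_entry]
      rw [hsub, Fin.val_last]
      have : (-1:ℂ)^(m+m) = 1 := Even.neg_one_pow ⟨m, rfl⟩
      rw [this, one_mul]
    · intro j _ hj
      obtain ⟨j₀, rfl⟩ := Fin.exists_castSucc_eq.2 hj
      rw [Qlastrow ξ hprod j₀]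
      ring
    · intro h
      exact absurd (Finset.mem_univ _) h
  have habsQll : ‖(Amat m ξ * Smat m ξ) (Fin.last m) (Fin.last m)‖ = 1 := by
    rw [Qlast]
    simp only [Amat, Matrix.of_apply, Fin.val_last, esE_top]
    rw [norm_mul, norm_pow, norm_neg, norm_one, one_pow, one_mul, norm_prod]
    rw [Finset.prod_congr rfl (fun i _ => h1 i), Finset.prod_const_one]
  have habsS : ‖(Smat m ξ).det‖ = 1 := by
    rw [Smat_det, norm_prod, Finset.prod_congr rfl (fun n _ => ?_), Finset.prod_const_one]
    by_cases h : (n:ℕ) < m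
    · rw [if_pos h, norm_neg, norm_mul, Complex.norm_I, one_mul, h1]
    · rw [if_neg h, norm_one]
  have habsV : ‖((Matrix.vandermonde ξ)ᵀ).det‖
      = ∏ i : Fin (m+1), ∏ j ∈ Finset.Ioi i, ‖ξ j - ξ i‖ := by
    rw [Matrix.det_transpose, Matrix.det_vandermonde, norm_prod]
    exact Finset.prod_congr rfl fun i _ => norm_prod _ _
  have key : ‖(Amat m ξ * Smat m ξ).det‖ = ‖(Mmat m ξ).det‖ := by
    rw [hdetQ, norm_mul, habsQll, one_mul]
  rw [← key, Matrix.det_mul, Amat_eq, Matrix.det_mul, norm_mul, norm_mul, habsS, mul_one,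
    Umat_det, norm_one, one_mul, habsV]

/-! ### conjugation symmetry -/

lemma conj_esE_mul (h1 : ∀ i, (starRingEnd ℂ) (ξ i) * ξ i = 1)
    (hprod : ∏ n, ξ n = (-1)^(m+1)) {k : ℕ} (hk : k ≤ m) (n : Fin (m+1)) :
    (starRingEnd ℂ) (ξ n) * (starRingEnd ℂ) (esE m ξ k n)
      = (-1)^(m+1) * esE m ξ (m-k) n := by
  have hcard : ((Finset.univ : Finset (Fin (m+1))).erase n).card = m := by
    rw [Finset.card_erase_of_mem (Finset.mem_univ n), Finset.card_univ, Fintype.card_fin]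
    omega
  have hcompl := sum_powersetCard_compl ((Finset.univ : Finset (Fin (m+1))).erase n)
    (k := k) (by omega) ξ
  rw [hcard] at hcompl
  rw [esE, esE, ← hcompl, _root_.map_sum, Finset.mul_sum, Finset.mul_sum]
  refine Finset.sum_congr rfl fun t ht => ?_
  rw [Finset.mem_powersetCard] at ht
  have e1 : ξ n * ((∏ i ∈ (Finset.univ.erase n) \ t, ξ i) * ∏ i ∈ t, ξ i) = (-1)^(m+1) := by
    rw [Finset.prod_sdiff ht.1, Finset.mul_prod_erase Finset.univ ξ (Finset.mem_univ n), hprod]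
  have hpt : (∏ i ∈ t, (starRingEnd ℂ) (ξ i)) * ∏ i ∈ t, ξ i = 1 := by
    rw [← Finset.prod_mul_distrib, Finset.prod_congr rfl (fun i _ => h1 i),
      Finset.prod_const_one]
  have hsq : ((-1:ℂ)^(m+1)) * ((-1:ℂ)^(m+1)) = 1 := by
    rw [← pow_add]
    exact Even.neg_one_pow ⟨m+1, rfl⟩
  rw [map_prod]
  calc (starRingEnd ℂ) (ξ n) * ∏ i ∈ t, (starRingEnd ℂ) (ξ i)
      = ((starRingEnd ℂ) (ξ n) * ∏ i ∈ t, (starRingEnd ℂ) (ξ i))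
          * (((-1:ℂ)^(m+1)) * ((-1:ℂ)^(m+1))) := by rw [hsq, mul_one]
    _ = ((starRingEnd ℂ) (ξ n) * ξ n)
          * (((∏ i ∈ t, (starRingEnd ℂ) (ξ i)) * ∏ i ∈ t, ξ i))
          * (∏ i ∈ (Finset.univ.erase n) \ t, ξ i) * ((-1:ℂ)^(m+1)) := by
        rw [← e1]; ring
    _ = (-1)^(m+1) * ∏ i ∈ (Finset.univ.erase n) \ t, ξ i := by
        rw [h1 n, hpt]; ring

def tauIdx (m : ℕ) (k : Fin m) : Fin m := ⟨m - 1 - (k:ℕ), by have := k.isLt; omega⟩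

lemma tau_tau (k : Fin m) : tauIdx m (tauIdx m k) = k := by
  have := k.isLt
  simp only [tauIdx, Fin.ext_iff]
  omega

lemma Mmat_conj (h1 : ∀ i, (starRingEnd ℂ) (ξ i) * ξ i = 1)
    (hprod : ∏ n, ξ n = (-1)^(m+1)) (k j : Fin m) :
    Mmat m ξ (tauIdx m k) j = (starRingEnd ℂ) (Mmat m ξ k j) := by
  have hk : (k:ℕ) ≤ m - 1 := by have := k.isLt; omega
  have hkm : (k:ℕ) ≤ m := by omega
  have hc2 := conj_esE_mul ξ h1 hprod hkm j.castSucc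
  have hl2 := conj_esE_mul ξ h1 hprod hkm (Fin.last m)
  have hstep : ∀ n : Fin (m+1), ξ n * esE m ξ (m-1-(k:ℕ)) n
      = esF m ξ (m-(k:ℕ)) - esE m ξ (m-(k:ℕ)) n := by
    intro n
    have h := esF_succ ξ (m-1-(k:ℕ)) n
    rw [show m-1-(k:ℕ)+1 = m-(k:ℕ) by omega] at h
    rw [h]; ring
  have hsc := hstep j.castSucc
  have hsl := hstep (Fin.last m)
  have hL : (-1:ℂ)^((m-1-(k:ℕ))+1) = (-1)^m * (-1)^(k:ℕ) := by
    rw [show (m-1-(k:ℕ))+1 = m - (k:ℕ) by omega, ← neg_one_pow_sub_aux hkm]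
  simp only [Mmat, Matrix.of_apply, tauIdx, _root_.map_mul, map_sub, map_pow, map_neg,
    _root_.map_one, Complex.conj_I]
  rw [hL, pow_succ (-1:ℂ) (k:ℕ)]
  rw [pow_succ (-1:ℂ) m] at hc2 hl2
  linear_combination ((-1:ℂ)^m * (-1)^(k:ℕ) * Complex.I) * hsc
    - ((-1:ℂ)^m * (-1)^(k:ℕ) * Complex.I) * hsl
    + ((-1:ℂ)^(k:ℕ) * (-1) * Complex.I) * hc2
    - ((-1:ℂ)^(k:ℕ) * (-1) * Complex.I) * hl2

/-! ### the unitary change-of-basis matrix `P` -/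

noncomputable def su : ℂ := ((Real.sqrt 2 / 2 : ℝ) : ℂ)

lemma su_mul_su : su * su = 1/2 := by
  rw [su, ← Complex.ofReal_mul]
  have h : Real.sqrt 2 * Real.sqrt 2 = 2 := Real.mul_self_sqrt (by norm_num)
  have h2 : Real.sqrt 2 / 2 * (Real.sqrt 2 / 2) = 1/2 := by
    rw [div_mul_div_comm, h]
    norm_num
  rw [h2]
  norm_num

lemma conj_su : (starRingEnd ℂ) su = su := Complex.conj_ofReal _

noncomputable def uC (m : ℕ) (k : Fin m) : ℂ :=
  if 2*((k:ℕ)+1) < m+1 then su else if 2*((k:ℕ)+1) = m+1 then 1 else -(Complex.I * su)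

noncomputable def vC (m : ℕ) (k : Fin m) : ℂ :=
  if 2*((k:ℕ)+1) < m+1 then Complex.I * su else if 2*((k:ℕ)+1) = m+1 then 0 else su

noncomputable def Pmat (m : ℕ) : Matrix (Fin m) (Fin m) ℂ :=
  Matrix.of fun k j => (if j = k then uC m k else 0) + (if j = tauIdx m k then vC m k else 0)

lemma sum_ite_ite (a b : Fin m) (x y : ℂ) :
    ∑ j, (if j = a then x else 0) * (if j = b then y else 0) = if a = b then x*y else 0 := by
  by_cases hab : a = b
  · subst hab
    rw [if_pos rfl, Finset.sum_eq_single a]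
    · rw [if_pos rfl, if_pos rfl]
    · intro j _ hj
      rw [if_neg hj, zero_mul]
    · intro h
      exact absurd (Finset.mem_univ _) h
  · rw [if_neg hab]
    apply Finset.sum_eq_zero
    intro j _
    by_cases hja : j = a
    · subst hja
      rw [if_neg (fun h => hab h), mul_zero]
    · rw [if_neg hja, zero_mul]

lemma tau_lt {k : Fin m} (h : 2*((k:ℕ)+1) < m+1) :
    ¬ 2*((tauIdx m k : ℕ)+1) < m+1 ∧ ¬ 2*((tauIdx m k : ℕ)+1) = m+1 := by
  have := k.isLt
  simp only [tauIdx]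
  omega

lemma tau_gt {k : Fin m} (h1 : ¬ 2*((k:ℕ)+1) < m+1) (h2 : ¬ 2*((k:ℕ)+1) = m+1) :
    2*((tauIdx m k : ℕ)+1) < m+1 := by
  have := k.isLt
  simp only [tauIdx]
  omega

lemma tau_eq_iff {k : Fin m} : tauIdx m k = k ↔ 2*((k:ℕ)+1) = m+1 := by
  have := k.isLt
  rw [Fin.ext_iff]
  simp only [tauIdx]
  omega

lemma Pmat_unitary : Pmat m * (Pmat m)ᴴ = 1 := by
  ext k k'
  rw [Matrix.mul_apply]
  simp only [Pmat, Matrix.conjTranspose_apply, Matrix.of_apply, RCLike.star_def, map_add,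
    apply_ite (starRingEnd ℂ), map_zero]
  simp only [add_mul, mul_add]
  rw [Finset.sum_add_distrib, Finset.sum_add_distrib, Finset.sum_add_distrib,
    sum_ite_ite, sum_ite_ite, sum_ite_ite, sum_ite_ite]
  have htau_inj : tauIdx m k = tauIdx m k' ↔ k = k' := by
    constructor
    · intro h
      rw [← tau_tau (k := k), h, tau_tau]
    · intro h
      rw [h]
  by_cases hkk : k = k'
  · subst hkk
    rw [if_pos rfl, if_pos rfl, Matrix.one_apply_eq]
    by_cases ht : tauIdx m k = k
    · have h2 : 2*((k:ℕ)+1) = m+1 := tau_eq_iff.1 ht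
      rw [if_pos ht, if_pos ht.symm]
      simp only [uC, vC, if_neg (show ¬ 2*((k:ℕ)+1) < m+1 by omega), if_pos h2]
      simp
    · rw [if_neg ht, if_neg (fun h => ht h.symm)]
      by_cases hlt : 2*((k:ℕ)+1) < m+1
      · simp only [uC, vC, if_pos hlt]
        simp only [map_neg, _root_.map_mul, Complex.conj_I, conj_su]
        linear_combination 2 * su_mul_su + (-(su*su)) * Complex.I_sq
      · have hne : ¬ 2*((k:ℕ)+1) = m+1 := fun h => ht (tau_eq_iff.2 h)
        simp only [uC, vC, if_neg hlt, if_neg hne]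
        simp only [map_neg, _root_.map_mul, Complex.conj_I, conj_su]
        linear_combination 2 * su_mul_su + (-(su*su)) * Complex.I_sq
  · rw [if_neg hkk, if_neg (fun h => hkk (htau_inj.1 h)), Matrix.one_apply_ne hkk]
    by_cases h2 : k = tauIdx m k'
    · have h3 : tauIdx m k = k' := by rw [h2, tau_tau]
      rw [if_pos h2, if_pos h3]
      have hkt : tauIdx m k' ≠ k' := fun h => hkk (h2.trans h)
      by_cases hlt : 2*((k':ℕ)+1) < m+1
      · have hg := tau_lt (k := k') hlt
        simp only [uC, vC, h2, if_neg hg.1, if_neg hg.2, if_pos hlt]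
        simp only [map_neg, _root_.map_mul, Complex.conj_I, conj_su]
        linear_combination (su*su) * Complex.I_sq
      · have hne : ¬ 2*((k':ℕ)+1) = m+1 := by
          intro h
          exact hkt (tau_eq_iff.2 h)
        have hg := tau_gt (k := k') hlt hne
        simp only [uC, vC, h2, if_pos hg, if_neg hlt, if_neg hne]
        simp only [map_neg, _root_.map_mul, Complex.conj_I, conj_su]
        linear_combination (su*su) * Complex.I_sq
    · have h3 : tauIdx m k ≠ k' := by
        intro h
        exact h2 (by rw [← h, tau_tau])
      rw [if_neg h2, if_neg h3]
      simp
  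
lemma Pmat_det_abs : ‖(Pmat m).det‖ = 1 := by
  have h := congrArg Matrix.det (Pmat_unitary (m := m))
  rw [Matrix.det_mul, Matrix.det_conjTranspose, Matrix.det_one] at h
  have h2 : ‖(Pmat m).det‖ * ‖(Pmat m).det‖ = 1 := by
    have h3 := congrArg (norm : ℂ → ℝ) h
    rwa [norm_mul, Complex.star_def, Complex.norm_conj, norm_one] at h3
  nlinarith [norm_nonneg ((Pmat m).det)]

lemma abs_det_of_P_rel (J : Matrix (Fin m) (Fin m) ℝ) (M : Matrix (Fin m) (Fin m) ℂ)
    (h : ∀ k j, M k j = uC m k * (J k j : ℂ) + vC m k * (J (tauIdx m k) j : ℂ)) :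
    ‖M.det‖ = |J.det| := by
  have hM : M = Pmat m * J.map (⇑Complex.ofRealHom) := by
    ext k j
    rw [Matrix.mul_apply]
    simp only [Pmat, Matrix.of_apply, Matrix.map_apply, add_mul, ite_mul, zero_mul]
    rw [Finset.sum_add_distrib, Finset.sum_ite_eq' Finset.univ k, Finset.sum_ite_eq' Finset.univ
      (tauIdx m k), if_pos (Finset.mem_univ _), if_pos (Finset.mem_univ _), h k j]
    rfl
  have hmap : (J.map (⇑Complex.ofRealHom)).det = ((J.det : ℝ) : ℂ) := by
    have h := RingHom.map_det Complex.ofRealHom J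
    rw [RingHom.mapMatrix_apply] at h
    exact h.symm
  rw [hM, Matrix.det_mul, norm_mul, Pmat_det_abs, one_mul, hmap, Complex.norm_real, Real.norm_eq_abs]

/-! ### the explicit root functions and their derivatives -/

lemma conj_mul_self_of_abs {z : ℂ} (h : ‖z‖ = 1) : (starRingEnd ℂ) z * z = 1 := by
  rw [mul_comm, Complex.mul_conj, Complex.normSq_eq_norm_sq, h]
  norm_num

noncomputable def xiFun (m : ℕ) (θ : EuclideanSpace ℝ (Fin m)) (n : Fin (m+1)) : ℂ :=
  if h : n = Fin.last m then
    (-1)^(m+1) * Complex.exp (-(Complex.I * ((∑ j, θ j : ℝ) : ℂ)))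
  else Complex.exp (Complex.I * ((θ (n.castPred h) : ℝ) : ℂ))

lemma xiFun_castSucc (m : ℕ) (θ : EuclideanSpace ℝ (Fin m)) (j : Fin m) :
    xiFun m θ j.castSucc = Complex.exp (Complex.I * ((θ j : ℝ) : ℂ)) := by
  rw [xiFun, dif_neg (Fin.ne_of_lt (Fin.castSucc_lt_last j)), Fin.castPred_castSucc]

lemma xiFun_last (m : ℕ) (θ : EuclideanSpace ℝ (Fin m)) :
    xiFun m θ (Fin.last m)
      = (-1)^(m+1) * Complex.exp (-(Complex.I * ((∑ j, θ j : ℝ) : ℂ))) := dif_pos rfl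

lemma xiFun_abs (m : ℕ) (θ : EuclideanSpace ℝ (Fin m)) (n : Fin (m+1)) :
    ‖xiFun m θ n‖ = 1 := by
  rw [xiFun]
  split_ifs with h
  · rw [norm_mul, norm_pow, norm_neg, norm_one, one_pow, one_mul,
      Complex.norm_exp]
    simp [Complex.mul_re]
  · rw [Complex.norm_exp]
    simp [Complex.mul_re]

lemma xiFun_prod (m : ℕ) (θ : EuclideanSpace ℝ (Fin m)) :
    ∏ n, xiFun m θ n = (-1)^(m+1) := by
  rw [Fin.prod_univ_castSucc, Finset.prod_congr rfl (fun j _ => xiFun_castSucc m θ j),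
    xiFun_last, ← Complex.exp_sum]
  have hsum : ∑ j, Complex.I * ((θ j : ℝ) : ℂ) = Complex.I * ((∑ j, θ j : ℝ) : ℂ) := by
    rw [← Finset.mul_sum, Complex.ofReal_sum]
  rw [hsum, mul_left_comm, ← Complex.exp_add, add_neg_cancel, Complex.exp_zero, mul_one]

noncomputable def cfun (m : ℕ) (θ : EuclideanSpace ℝ (Fin m)) (k : ℕ) : ℂ :=
  (-1)^k * esF m (xiFun m θ) k

lemma prod_coeff {m : ℕ} (ξv : Fin (m+1) → ℂ) {k : ℕ} (hk : k ≤ m+1) :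
    (∏ n, (Polynomial.X - Polynomial.C (ξv n))).coeff (m+1-k) = (-1)^k * esF m ξv k := by
  classical
  have hcard : Multiset.card (Finset.univ.val.map ξv) = m+1 := by simp
  have h := Multiset.prod_X_sub_C_coeff (Finset.univ.val.map ξv)
    (k := m+1-k) (by rw [hcard]; omega)
  rw [hcard, show m+1-(m+1-k) = k by omega] at h
  have h3 : (Multiset.map (fun t => Polynomial.X - Polynomial.C t) (Finset.univ.val.map ξv)).prod
      = ∏ n, (Polynomial.X - Polynomial.C (ξv n)) := by
    rw [Multiset.map_map]
    rfl
  rw [h3] at h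
  rw [h, Finset.esymm_map_val]
  rfl

noncomputable def LFun (m : ℕ) (θ : EuclideanSpace ℝ (Fin m)) (n : Fin (m+1)) :
    EuclideanSpace ℝ (Fin m) →L[ℝ] ℂ :=
  if h : n = Fin.last m then
    (-(Complex.I * xiFun m θ n)) •
      (Complex.ofRealCLM.comp (∑ j : Fin m, EuclideanSpace.proj j))
  else (Complex.I * xiFun m θ n) •
      (Complex.ofRealCLM.comp (EuclideanSpace.proj (n.castPred h)))

lemma hasFDerivAt_xiFun (m : ℕ) (θ : EuclideanSpace ℝ (Fin m)) (n : Fin (m+1)) :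
    HasFDerivAt (fun θ' => xiFun m θ' n) (LFun m θ n) θ := by
  by_cases h : n = Fin.last m
  · subst h
    have heq : (fun θ' : EuclideanSpace ℝ (Fin m) => xiFun m θ' (Fin.last m))
        = fun θ' => (-1:ℂ)^(m+1) * Complex.exp (-(Complex.I * ((∑ j, θ' j : ℝ) : ℂ))) := by
      funext θ'
      rw [xiFun_last]
    rw [heq, LFun, dif_pos rfl]
    have hlin0 : (fun θ' : EuclideanSpace ℝ (Fin m) => -(Complex.I * ((∑ j, θ' j : ℝ) : ℂ)))
        = ⇑((-Complex.I) •
            (Complex.ofRealCLM.comp (∑ j : Fin m, EuclideanSpace.proj (𝕜 := ℝ) j))) := by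
      funext θ'
      simp only [ContinuousLinearMap.smul_apply, ContinuousLinearMap.comp_apply,
        ContinuousLinearMap.sum_apply, PiLp.proj_apply, Complex.ofRealCLM_apply,
        smul_eq_mul, Complex.ofReal_sum]
      ring
    have hlin : HasFDerivAt (fun θ' : EuclideanSpace ℝ (Fin m) =>
          -(Complex.I * ((∑ j, θ' j : ℝ) : ℂ)))
        ((-Complex.I) • (Complex.ofRealCLM.comp (∑ j : Fin m, EuclideanSpace.proj j))) θ := by
      rw [hlin0]
      exact ((-Complex.I) •
        (Complex.ofRealCLM.comp (∑ j : Fin m, EuclideanSpace.proj (𝕜 := ℝ) j))).hasFDerivAt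
    have hfinal := hlin.cexp.const_mul ((-1:ℂ)^(m+1))
    have hD : (-(Complex.I * xiFun m θ (Fin.last m))) •
          (Complex.ofRealCLM.comp (∑ j : Fin m, EuclideanSpace.proj (𝕜 := ℝ) j))
        = ((-1:ℂ)^(m+1)) • (Complex.exp (-(Complex.I * ((∑ j, θ j : ℝ) : ℂ))) •
            ((-Complex.I) • (Complex.ofRealCLM.comp (∑ j : Fin m, EuclideanSpace.proj j)))) := by
      rw [smul_smul, smul_smul, xiFun_last]
      congr 1
      ring
    rw [hD]
    exact hfinal
  · have heq : (fun θ' : EuclideanSpace ℝ (Fin m) => xiFun m θ' n)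
        = fun θ' => Complex.exp (Complex.I * ((θ' (n.castPred h) : ℝ) : ℂ)) := by
      funext θ'
      rw [xiFun, dif_neg h]
    rw [heq, LFun, dif_neg h]
    have hlin0 : (fun θ' : EuclideanSpace ℝ (Fin m) => Complex.I * ((θ' (n.castPred h) : ℝ) : ℂ))
        = ⇑(Complex.I • (Complex.ofRealCLM.comp (EuclideanSpace.proj (𝕜 := ℝ) (n.castPred h)))) := by
      funext θ'
      simp only [ContinuousLinearMap.smul_apply, ContinuousLinearMap.comp_apply,
        PiLp.proj_apply, Complex.ofRealCLM_apply, smul_eq_mul]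
    have hlin : HasFDerivAt (fun θ' : EuclideanSpace ℝ (Fin m) =>
          Complex.I * ((θ' (n.castPred h) : ℝ) : ℂ))
        (Complex.I • (Complex.ofRealCLM.comp (EuclideanSpace.proj (n.castPred h)))) θ := by
      rw [hlin0]
      exact (Complex.I •
        (Complex.ofRealCLM.comp (EuclideanSpace.proj (𝕜 := ℝ) (n.castPred h)))).hasFDerivAt
    have hfinal := hlin.cexp
    have hD : (Complex.I * xiFun m θ n) •
          (Complex.ofRealCLM.comp (EuclideanSpace.proj (𝕜 := ℝ) (n.castPred h)))
        = Complex.exp (Complex.I * ((θ (n.castPred h) : ℝ) : ℂ)) •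
            (Complex.I • (Complex.ofRealCLM.comp (EuclideanSpace.proj (n.castPred h)))) := by
      rw [smul_smul, xiFun, dif_neg h]
      congr 1
      ring
    rw [hD]
    exact hfinal

noncomputable def DcFun (m : ℕ) (θ : EuclideanSpace ℝ (Fin m)) (k : ℕ) :
    EuclideanSpace ℝ (Fin m) →L[ℝ] ℂ :=
  (-1:ℂ)^k • ∑ t ∈ (Finset.univ : Finset (Fin (m+1))).powersetCard k,
    ∑ n ∈ t, (∏ i ∈ t.erase n, xiFun m θ i) • LFun m θ n

lemma hasFDerivAt_cfun (m : ℕ) (θ : EuclideanSpace ℝ (Fin m)) (k : ℕ) :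
    HasFDerivAt (fun θ' => cfun m θ' k) (DcFun m θ k) θ := by
  have hsum : HasFDerivAt
      (fun θ' => ∑ t ∈ (Finset.univ : Finset (Fin (m+1))).powersetCard k,
        ∏ i ∈ t, xiFun m θ' i)
      (∑ t ∈ (Finset.univ : Finset (Fin (m+1))).powersetCard k,
        ∑ n ∈ t, (∏ i ∈ t.erase n, xiFun m θ i) • LFun m θ n) θ := by
    refine HasFDerivAt.fun_sum fun t _ => ?_
    exact HasFDerivAt.finset_prod fun n _ => hasFDerivAt_xiFun m θ n
  exact hsum.const_mul ((-1:ℂ)^k)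

lemma LFun_eval (m : ℕ) (θ : EuclideanSpace ℝ (Fin m)) (n : Fin (m+1)) (j : Fin m) :
    LFun m θ n (EuclideanSpace.single j 1)
      = (if n = j.castSucc then Complex.I * xiFun m θ n else 0)
        + (if n = Fin.last m then -(Complex.I * xiFun m θ n) else 0) := by
  by_cases h : n = Fin.last m
  · subst h
    rw [if_neg (Ne.symm (Fin.ne_of_lt (Fin.castSucc_lt_last j))), zero_add, if_pos rfl,
      LFun, dif_pos rfl]
    rw [ContinuousLinearMap.smul_apply, ContinuousLinearMap.comp_apply,
      ContinuousLinearMap.sum_apply]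
    have hsum : ∑ i : Fin m, EuclideanSpace.proj (𝕜 := ℝ) i (EuclideanSpace.single j (1:ℝ))
        = 1 := by
      have hterm : ∀ i : Fin m, EuclideanSpace.proj (𝕜 := ℝ) i (EuclideanSpace.single j (1:ℝ))
          = if i = j then 1 else 0 := by
        intro i
        rw [PiLp.proj_apply, EuclideanSpace.single_apply]
      rw [Finset.sum_congr rfl (fun i _ => hterm i), Finset.sum_ite_eq' Finset.univ j,
        if_pos (Finset.mem_univ _)]
    rw [hsum, Complex.ofRealCLM_apply, Complex.ofReal_one, smul_eq_mul, mul_one]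
  · rw [LFun, dif_neg h, if_neg h, add_zero]
    rw [ContinuousLinearMap.smul_apply, ContinuousLinearMap.comp_apply, smul_eq_mul,
      Complex.ofRealCLM_apply]
    have hproj : EuclideanSpace.proj (𝕜 := ℝ) (n.castPred h) (EuclideanSpace.single j (1:ℝ))
        = if n = j.castSucc then 1 else 0 := by
      rw [PiLp.proj_apply, EuclideanSpace.single_apply]
      by_cases hc : n = j.castSucc
      · rw [if_pos hc, if_pos]
        subst hc
        exact Fin.castPred_castSucc _
      · rw [if_neg hc, if_neg]
        intro he
        exact hc (by rw [← Fin.castSucc_castPred n h, he])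
    rw [hproj]
    split_ifs with hc <;> simp

lemma DcFun_eval (m : ℕ) (θ : EuclideanSpace ℝ (Fin m)) (k j : Fin m) :
    DcFun m θ ((k:ℕ)+1) (EuclideanSpace.single j 1) = Mmat m (xiFun m θ) k j := by
  rw [DcFun, ContinuousLinearMap.smul_apply, ContinuousLinearMap.sum_apply, smul_eq_mul]
  have hinner : ∀ t ∈ (Finset.univ : Finset (Fin (m+1))).powersetCard ((k:ℕ)+1),
      (∑ n ∈ t, (∏ i ∈ t.erase n, xiFun m θ i) • LFun m θ n) (EuclideanSpace.single j 1)
      = (if j.castSucc ∈ t then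
            (∏ i ∈ t.erase j.castSucc, xiFun m θ i) * (Complex.I * xiFun m θ j.castSucc) else 0)
        + (if Fin.last m ∈ t then
            (∏ i ∈ t.erase (Fin.last m), xiFun m θ i) * (-(Complex.I * xiFun m θ (Fin.last m)))
          else 0) := by
    intro t _
    rw [ContinuousLinearMap.sum_apply]
    have hterm : ∀ n ∈ t, ((∏ i ∈ t.erase n, xiFun m θ i) • LFun m θ n)
          (EuclideanSpace.single j 1)
        = (if n = j.castSucc then
              (∏ i ∈ t.erase n, xiFun m θ i) * (Complex.I * xiFun m θ n) else 0)
          + (if n = Fin.last m then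
              (∏ i ∈ t.erase n, xiFun m θ i) * (-(Complex.I * xiFun m θ n)) else 0) := by
      intro n _
      rw [ContinuousLinearMap.smul_apply, LFun_eval, smul_eq_mul, mul_add, mul_ite, mul_zero,
        mul_ite, mul_zero]
    rw [Finset.sum_congr rfl hterm, Finset.sum_add_distrib,
      Finset.sum_ite_eq' t j.castSucc, Finset.sum_ite_eq' t (Fin.last m)]
  rw [Finset.sum_congr rfl hinner, Finset.sum_add_distrib]
  have ha : ∀ (a : Fin (m+1)) (c : ℂ),
      (∑ t ∈ (Finset.univ : Finset (Fin (m+1))).powersetCard ((k:ℕ)+1),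
        if a ∈ t then (∏ i ∈ t.erase a, xiFun m θ i) * c else 0)
      = esE m (xiFun m θ) (k:ℕ) a * c := by
    intro a c
    have hstep : ∀ t : Finset (Fin (m+1)),
        (if a ∈ t then (∏ i ∈ t.erase a, xiFun m θ i) * c else 0)
        = (if a ∈ t then (∏ i ∈ t.erase a, xiFun m θ i) else 0) * c := by
      intro t
      split_ifs <;> simp
    rw [Finset.sum_congr rfl (fun t _ => hstep t), ← Finset.sum_mul,
      sum_powersetCard_mem Finset.univ (Finset.mem_univ a) (k:ℕ) (xiFun m θ)]
    rfl
  rw [ha, ha, Mmat, Matrix.of_apply]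
  ring

/-! ### the coordinate functions of `E` and their derivatives -/

noncomputable def efun (m : ℕ) (θ : EuclideanSpace ℝ (Fin m)) (j : Fin m) : ℝ :=
  if 2*((j:ℕ)+1) < m+1 then Real.sqrt 2 * (cfun m θ ((j:ℕ)+1)).re
  else if 2*((j:ℕ)+1) = m+1 then (cfun m θ ((j:ℕ)+1)).re
  else -(Real.sqrt 2 * (cfun m θ ((j:ℕ)+1)).im)

noncomputable def DeFun (m : ℕ) (θ : EuclideanSpace ℝ (Fin m)) (j : Fin m) :
    EuclideanSpace ℝ (Fin m) →L[ℝ] ℝ :=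
  if 2*((j:ℕ)+1) < m+1 then
    Real.sqrt 2 • (Complex.reCLM.comp (DcFun m θ ((j:ℕ)+1)))
  else if 2*((j:ℕ)+1) = m+1 then Complex.reCLM.comp (DcFun m θ ((j:ℕ)+1))
  else -(Real.sqrt 2 • (Complex.imCLM.comp (DcFun m θ ((j:ℕ)+1))))

lemma hasFDerivAt_efun (m : ℕ) (θ : EuclideanSpace ℝ (Fin m)) (j : Fin m) :
    HasFDerivAt (fun θ' => efun m θ' j) (DeFun m θ j) θ := by
  have hc := hasFDerivAt_cfun m θ ((j:ℕ)+1)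
  have hre : HasFDerivAt (fun θ' => (cfun m θ' ((j:ℕ)+1)).re)
      (Complex.reCLM.comp (DcFun m θ ((j:ℕ)+1))) θ := Complex.reCLM.hasFDerivAt.comp θ hc
  have him : HasFDerivAt (fun θ' => (cfun m θ' ((j:ℕ)+1)).im)
      (Complex.imCLM.comp (DcFun m θ ((j:ℕ)+1))) θ := Complex.imCLM.hasFDerivAt.comp θ hc
  unfold efun DeFun
  split_ifs with h1 h2
  · have := hre.const_mul (Real.sqrt 2)
    simpa [smul_eq_mul] using this
  · exact hre
  · exact (him.const_mul (Real.sqrt 2)).neg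

lemma DeFun_eval (m : ℕ) (θ : EuclideanSpace ℝ (Fin m)) (k j : Fin m) :
    DeFun m θ k (EuclideanSpace.single j 1)
      = if 2*((k:ℕ)+1) < m+1 then Real.sqrt 2 * (Mmat m (xiFun m θ) k j).re
        else if 2*((k:ℕ)+1) = m+1 then (Mmat m (xiFun m θ) k j).re
        else -(Real.sqrt 2 * (Mmat m (xiFun m θ) k j).im) := by
  rw [DeFun]
  split_ifs with h1 h2
  · rw [ContinuousLinearMap.smul_apply, ContinuousLinearMap.comp_apply, DcFun_eval,
      smul_eq_mul, Complex.reCLM_apply]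
  · rw [ContinuousLinearMap.comp_apply, DcFun_eval, Complex.reCLM_apply]
  · rw [ContinuousLinearMap.neg_apply, ContinuousLinearMap.smul_apply,
      ContinuousLinearMap.comp_apply, DcFun_eval, smul_eq_mul, Complex.imCLM_apply]

lemma su_mul_sqrt2 : su * ((Real.sqrt 2 : ℝ) : ℂ) = 1 := by
  rw [su, ← Complex.ofReal_mul]
  have h : Real.sqrt 2 / 2 * Real.sqrt 2 = 1 := by
    rw [div_mul_eq_mul_div, Real.mul_self_sqrt (by norm_num)]
    norm_num
  rw [h, Complex.ofReal_one]

lemma Mmat_P_rel (m : ℕ) (θ : EuclideanSpace ℝ (Fin m)) (k j : Fin m) :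
    Mmat m (xiFun m θ) k j
      = uC m k * ((DeFun m θ k (EuclideanSpace.single j 1) : ℝ) : ℂ)
        + vC m k * ((DeFun m θ (tauIdx m k) (EuclideanSpace.single j 1) : ℝ) : ℂ) := by
  have hconj : ∀ (k' j' : Fin m), Mmat m (xiFun m θ) (tauIdx m k') j'
      = (starRingEnd ℂ) (Mmat m (xiFun m θ) k' j') :=
    Mmat_conj (xiFun m θ) (fun i => conj_mul_self_of_abs (xiFun_abs m θ i)) (xiFun_prod m θ)
  rw [DeFun_eval, DeFun_eval]
  by_cases h1 : 2*((k:ℕ)+1) < m+1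
  · have hg := tau_lt h1
    rw [if_pos h1, if_neg hg.1, if_neg hg.2, hconj k j]
    rw [uC, vC, if_pos h1, if_pos h1]
    rw [Complex.conj_im]
    have hM := Complex.re_add_im (Mmat m (xiFun m θ) k j)
    push_cast
    linear_combination (-(((Mmat m (xiFun m θ) k j).re : ℂ)
      + ((Mmat m (xiFun m θ) k j).im : ℂ) * Complex.I)) * su_mul_sqrt2 - hM
  · by_cases h2 : 2*((k:ℕ)+1) = m+1
    · have ht : tauIdx m k = k := tau_eq_iff.2 h2
      rw [if_neg h1, if_pos h2, ht, if_neg h1, if_pos h2]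
      rw [uC, vC, if_neg h1, if_neg h1, if_pos h2, if_pos h2]
      have hreal : ((Mmat m (xiFun m θ) k j).re : ℂ) = Mmat m (xiFun m θ) k j := by
        have h3 := hconj k j
        rw [ht] at h3
        exact Complex.conj_eq_iff_re.1 h3.symm
      rw [hreal]
      ring
    · have hg := tau_gt h1 h2
      rw [if_neg h1, if_neg h2, if_pos hg, hconj k j]
      rw [uC, vC, if_neg h1, if_neg h1, if_neg h2, if_neg h2]
      rw [Complex.conj_re]
      have hM := Complex.re_add_im (Mmat m (xiFun m θ) k j)
      push_cast
      linear_combination (-(((Mmat m (xiFun m θ) k j).re : ℂ)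
        + ((Mmat m (xiFun m θ) k j).im : ℂ) * Complex.I)) * su_mul_sqrt2 - hM

lemma prod_pairs {n : ℕ} (f : Fin n → Fin n → ℝ) :
    ∏ p ∈ Finset.univ.filter (fun p : Fin n × Fin n => p.1 < p.2), f p.1 p.2
      = ∏ i, ∏ j ∈ Finset.Ioi i, f i j := by
  rw [Finset.prod_filter]
  rw [Fintype.prod_prod_type]
  refine Finset.prod_congr rfl fun i _ => ?_
  rw [← Finset.prod_filter]
  congr 1
  ext j
  simp


lemma crPoly_coeff (N : ℕ) (hN : 2 ≤ N) (a : EuclideanSpace ℝ (Fin (N-1))) {k : ℕ}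
    (hk1 : 1 ≤ k) (hk2 : k ≤ N - 1) :
    (crPoly N a).coeff (N - k) = crCoeff N a k := by
  rw [crPoly, Polynomial.coeff_add, Polynomial.coeff_add, Polynomial.coeff_X_pow,
    Polynomial.coeff_one, if_neg (by omega : ¬(N - k = N)), if_neg (by omega : ¬(N - k = 0)),
    zero_add, zero_add, Polynomial.finset_sum_coeff, Finset.sum_eq_single k]
  · rw [Polynomial.coeff_C_mul, Polynomial.coeff_X_pow, if_pos rfl, mul_one]
  · intro k' hk' hne
    rw [Finset.mem_Icc] at hk'
    rw [Polynomial.coeff_C_mul, Polynomial.coeff_X_pow, if_neg (by omega), mul_zero]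
  · intro hmem
    exact absurd (Finset.mem_Icc.2 ⟨hk1, hk2⟩) hmem

end CRproof

/-- The root-to-coefficient map `E : (θ_1, …, θ_{N-1}) ↦ a`, where `a` is the unique point of
`ℝ^{N-1}` whose associated CR polynomial is `∏_{n=1}^N (x - ξ_n)` with `ξ_n = e^{iθ_n}` for
`n < N` and `ξ_N = (-1)^N / (ξ_1 ⋯ ξ_{N-1})`, is differentiable, and the absolute value of its
Jacobian determinant at `θ` equals `∏_{m < n} |ξ_n - ξ_m|`. -/
theorem jacobian_of_root_map (N : ℕ) (hN : 2 ≤ N)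
    (E : EuclideanSpace ℝ (Fin (N - 1)) → EuclideanSpace ℝ (Fin (N - 1)))
    (ξ : EuclideanSpace ℝ (Fin (N - 1)) → Fin N → ℂ)
    (hξ : ∀ θ (n : Fin N) (h : (n : ℕ) < N - 1),
      ξ θ n = Complex.exp (Complex.I * θ ⟨n, h⟩))
    (hξN : ∀ θ (n : Fin N), (n : ℕ) = N - 1 →
      ξ θ n = (-1) ^ N / ∏ m : Fin (N - 1), Complex.exp (Complex.I * θ m))
    (hE : ∀ θ, crPoly N (E θ) = ∏ n : Fin N, (X - C (ξ θ n))) :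
    Differentiable ℝ E ∧
      ∀ θ, |LinearMap.det ((fderiv ℝ E θ) :
              EuclideanSpace ℝ (Fin (N - 1)) →ₗ[ℝ] EuclideanSpace ℝ (Fin (N - 1)))| =
        ∏ p ∈ Finset.univ.filter (fun p : Fin N × Fin N => p.1 < p.2),
          ‖ξ θ p.2 - ξ θ p.1‖ := by
  classical
  obtain ⟨m, rfl⟩ : ∃ m, N = m + 1 := ⟨N - 1, by omega⟩
  have hm : 1 ≤ m := by omega
  have hx : ∀ θ n, ξ θ n = CRproof.xiFun m θ n := by
    intro θ n
    by_cases h : n = Fin.last m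
    · subst h
      have h2 := hξN θ (Fin.last m) (by simp)
      rw [h2, CRproof.xiFun_last]
      have h3 : (∏ i : Fin (m+1-1), Complex.exp (Complex.I * ((θ i : ℝ) : ℂ)))
          = Complex.exp (Complex.I * ((∑ j : Fin m, θ j : ℝ) : ℂ)) := by
        rw [← Complex.exp_sum]
        congr 1
        rw [Complex.ofReal_sum, Finset.mul_sum]
        rfl
      rw [h3, Complex.exp_neg, div_eq_mul_inv]
    · obtain ⟨j, rfl⟩ := Fin.exists_castSucc_eq.2 h
      have hlt : ((j.castSucc : Fin (m+1)) : ℕ) < m + 1 - 1 := j.isLt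
      rw [hξ θ j.castSucc hlt, CRproof.xiFun_castSucc]
      have hj : (⟨((j.castSucc : Fin (m+1)) : ℕ), hlt⟩ : Fin (m+1-1)) = j := by
        ext
        simp
      rw [hj]
  have hcc : ∀ θ (k : ℕ), 1 ≤ k → k ≤ m → crCoeff (m+1) (E θ) k = CRproof.cfun m θ k := by
    intro θ k h1 h2
    have hco := CRproof.crPoly_coeff (m+1) (by omega) (E θ) h1 (by omega)
    rw [← hco, hE θ, Finset.prod_congr rfl (fun n _ => by rw [hx θ n])]
    exact CRproof.prod_coeff (CRproof.xiFun m θ) (by omega)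
  have hs2 : ((Real.sqrt 2 : ℝ) : ℂ) ≠ 0 :=
    Complex.ofReal_ne_zero.2 (Real.sqrt_pos.2 (by norm_num)).ne'
  have hEcomp : ∀ θ (j : Fin m), E θ j = CRproof.efun m θ j := by
    intro θ j
    have h := hcc θ ((j:ℕ)+1) (by omega) (by have := j.isLt; omega)
    rw [crCoeff, dif_pos (show 1 ≤ (j:ℕ)+1 ∧ (j:ℕ)+1 ≤ (m+1)-1 from
      ⟨by omega, by have := j.isLt; omega⟩)] at h
    simp only [Nat.add_sub_cancel, Fin.eta] at h
    rw [CRproof.efun]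
    split_ifs at h ⊢ with hlt heq
    · rw [div_eq_iff hs2] at h
      have hre := congrArg Complex.re h
      simp only [Complex.add_re, Complex.ofReal_re, Complex.mul_re, Complex.I_re,
        Complex.I_im, Complex.ofReal_im, Complex.mul_im, zero_mul, one_mul, mul_zero,
        sub_zero, zero_sub, mul_one, zero_add, add_zero, neg_zero] at hre
      rw [mul_comm] at hre
      exact hre
    · have hre := congrArg Complex.re h
      simp only [Complex.ofReal_re] at hre
      exact hre
    · rw [div_eq_iff hs2] at h
      have him := congrArg Complex.im h
      simp only [Complex.sub_im, Complex.ofReal_im, Complex.mul_im, Complex.I_re,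
        Complex.I_im, Complex.ofReal_re, Complex.mul_re, zero_mul, one_mul, mul_zero,
        sub_zero, zero_sub, mul_one, zero_add, add_zero, neg_zero] at him
      have h4 := neg_eq_iff_eq_neg.mp him
      rw [mul_comm ((CRproof.cfun m θ ((j:ℕ)+1)).im) (Real.sqrt 2)] at h4
      exact h4
  have hEderiv : ∀ θ, HasFDerivAt E
      (((PiLp.continuousLinearEquiv 2 ℝ (fun _ : Fin m => ℝ)).symm.toContinuousLinearMap).comp
        (ContinuousLinearMap.pi (fun j => CRproof.DeFun m θ j))) θ := by
    intro θ
    have hF : HasFDerivAt (fun θ' (j : Fin m) => CRproof.efun m θ' j)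
        (ContinuousLinearMap.pi fun j => CRproof.DeFun m θ j) θ :=
      hasFDerivAt_pi.2 fun j => CRproof.hasFDerivAt_efun m θ j
    have hG := (((PiLp.continuousLinearEquiv 2 ℝ
      (fun _ : Fin m => ℝ)).symm.toContinuousLinearMap).hasFDerivAt).comp θ hF
    have hEeq : E = (⇑(PiLp.continuousLinearEquiv 2 ℝ
        (fun _ : Fin m => ℝ)).symm.toContinuousLinearMap)
          ∘ (fun θ' (j : Fin m) => CRproof.efun m θ' j) := by
      funext θ'
      ext j
      exact hEcomp θ' j
    rw [hEeq]
    exact hG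
  refine ⟨fun θ => (hEderiv θ).differentiableAt, fun θ => ?_⟩
  rw [(hEderiv θ).fderiv]
  have hdet : LinearMap.det
      ((((PiLp.continuousLinearEquiv 2 ℝ (fun _ : Fin m => ℝ)).symm.toContinuousLinearMap).comp
        (ContinuousLinearMap.pi (fun j => CRproof.DeFun m θ j)) :
          EuclideanSpace ℝ (Fin m) →L[ℝ] EuclideanSpace ℝ (Fin m)) :
            EuclideanSpace ℝ (Fin m) →ₗ[ℝ] EuclideanSpace ℝ (Fin m))
      = (Matrix.of fun k j : Fin m => CRproof.DeFun m θ k (EuclideanSpace.single j 1)).det := by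
    rw [← LinearMap.det_toMatrix (PiLp.basisFun 2 ℝ (Fin m))]
    congr 1
  refine Eq.trans (congrArg (fun r : ℝ => |r|) hdet) ?_
  show |(Matrix.of fun k j : Fin m => CRproof.DeFun m θ k (EuclideanSpace.single j 1)).det| = _
  have hrel := CRproof.abs_det_of_P_rel
    (Matrix.of fun k j : Fin m => CRproof.DeFun m θ k (EuclideanSpace.single j 1))
    (CRproof.Mmat m (CRproof.xiFun m θ))
    (fun k j => CRproof.Mmat_P_rel m θ k j)
  rw [← hrel, CRproof.abs_det_Mmat (CRproof.xiFun m θ) (CRproof.xiFun_abs m θ)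
    (CRproof.xiFun_prod m θ),
    CRproof.prod_pairs (fun a b : Fin (m+1) => ‖ξ θ b - ξ θ a‖)]
  refine Finset.prod_congr rfl fun i _ => Finset.prod_congr rfl fun j _ => ?_
  rw [hx θ i, hx θ j]
end
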